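/- arXiv:2511.22014 — 10 statements merged into one kernel-verified Lean document; each statement's English description precedes it below -/
import Mathlib

section
/- Let H=(V,E) be an orderly hypergraph in which every vertex belongs to at least one edge. Then the nonempty sets P_H(e), for e ∈ E, together with the sets in ∩²_E, are pairwise disjoint and their union is V; that is, they form a partition of V. -/
open Set

variable {V : Type*}

/-- A hypergraph (given by its edge set `E`) is *orderly* if for any two distinct
edges `e₁, e₂` with nonempty intersection `S = e₁ ∩ e₂`, every edge `e` satisfies
`S ⊆ e` or `S ∩ e = ∅`. -/
def Orderly (E : Set (Set V)) : Prop :=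
  ∀ e₁ ∈ E, ∀ e₂ ∈ E, e₁ ≠ e₂ → (e₁ ∩ e₂).Nonempty →
    ∀ e ∈ E, e₁ ∩ e₂ ⊆ e ∨ (e₁ ∩ e₂) ∩ e = ∅

/-- The private vertices of an edge `e`: vertices of `e` belonging to no other edge. -/
def PrivateVerts (E : Set (Set V)) (e : Set V) : Set V :=
  {v ∈ e | ∀ e' ∈ E, e' ≠ e → v ∉ e'}

/-- `∩²_E`: the nonempty intersections of pairs of distinct edges. -/
def PairInts (E : Set (Set V)) : Set (Set V) :=
  {S | S.Nonempty ∧ ∃ e₁ ∈ E, ∃ e₂ ∈ E, e₁ ≠ e₂ ∧ S = e₁ ∩ e₂}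

/-- A path of length `t` in the hypergraph: an alternating sequence of `t+1` pairwise
distinct vertices and `t` pairwise distinct edges, consecutive vertices lying in the
corresponding edge. -/
def IsHPath (E : Set (Set V)) (t : ℕ) (v : Fin (t + 1) → V) (e : Fin t → Set V) : Prop :=
  Function.Injective v ∧ Function.Injective e ∧
    (∀ i : Fin t, e i ∈ E) ∧ ∀ i : Fin t, v i.castSucc ∈ e i ∧ v i.succ ∈ e i

/-- The distance between two vertices: the minimum length of a path joining them. -/
noncomputable def hDist (E : Set (Set V)) (x y : V) : ℕ :=
  sInf {t | ∃ v : Fin (t + 1) → V, ∃ e : Fin t → Set V,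
    IsHPath E t v e ∧ v 0 = x ∧ v (Fin.last t) = y}

/-- A hypergraph is connected if every two vertices are joined by a path. -/
def HConnected (E : Set (Set V)) : Prop :=
  ∀ x y : V, ∃ (t : ℕ) (v : Fin (t + 1) → V) (e : Fin t → Set V),
    IsHPath E t v e ∧ v 0 = x ∧ v (Fin.last t) = y

/-- A hypergraph is a hypertree if there is a tree `T` on `V` such that every hyperedge
induces a connected subtree of `T`. -/
def IsHypertree (E : Set (Set V)) : Prop :=
  ∃ T : SimpleGraph V, T.IsTree ∧ ∀ e ∈ E, (T.induce e).Connected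

/-- No edge is (strictly or otherwise) contained in a different edge. -/
def NoNestedEdges (E : Set (Set V)) : Prop :=
  ∀ e ∈ E, ∀ e' ∈ E, e ⊆ e' → e = e'

/-- The sub-hypergraph induced on `U`: `{e ∩ U : e ∈ E} \ {∅}`. -/
def InducedH (E : Set (Set V)) (U : Set V) : Set (Set V) :=
  {s | s.Nonempty ∧ ∃ e ∈ E, s = e ∩ U}

/-- Fagin-acyclicity: there is no set of `t ≥ 3` distinct vertices on which the induced
sub-hypergraph is an ordinary graph cycle. -/
def FaginAcyclic (E : Set (Set V)) : Prop :=
  ¬ ∃ (t : ℕ) (u : Fin (t + 3) → V), Function.Injective u ∧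
    InducedH E (Set.range u) = {s : Set V | ∃ i, s = {u i, u (i + 1)}}

/-- Conformality: every set of at least two vertices that is pairwise covered by edges is
contained in a single edge. -/
def HyperConformal (E : Set (Set V)) : Prop :=
  ∀ U : Set V, 2 ≤ U.ncard →
    (∀ x ∈ U, ∀ y ∈ U, ∃ e ∈ E, x ∈ e ∧ y ∈ e) → ∃ e ∈ E, U ⊆ e

/-- α-acyclicity: acyclic and conformal. -/
def AlphaAcyclic (E : Set (Set V)) : Prop := FaginAcyclic E ∧ HyperConformal E

/-- β-acyclicity: every subset of the edge set is α-acyclic. -/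
def BetaAcyclic (E : Set (Set V)) : Prop := ∀ E' ⊆ E, AlphaAcyclic E'

/-- The parts of the canonical decomposition of the vertex set of an orderly hypergraph:
the nonempty sets of private vertices of edges, together with the nonempty pairwise
intersections of distinct edges. -/
def SkelParts (E : Set (Set V)) : Set (Set V) :=
  {S | S.Nonempty ∧ ∃ e ∈ E, S = PrivateVerts E e} ∪ PairInts E

/-- For an orderly hypergraph in which every vertex belongs to at least
one edge, the nonempty private-vertex sets `P_H(e)` together with the sets in `∩²_E` are
pairwise disjoint and their union is `V`: they form a partition of `V`. -/
theorem stmt_0 {V : Type*} [Fintype V] (E : Set (Set V))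
    (hcard : ∀ e ∈ E, 2 ≤ e.ncard) (hord : Orderly E)
    (hcover : ∀ v : V, ∃ e ∈ E, v ∈ e) :
    (∀ S ∈ SkelParts E, ∀ S' ∈ SkelParts E, S ≠ S' → S ∩ S' = ∅) ∧
      ⋃₀ SkelParts E = Set.univ := by
  constructor
  · intro S hS S' hS' hne
    ext v
    simp only [Set.mem_inter_iff, Set.mem_empty_iff_false, iff_false, not_and]
    intro hvS hvS'
    apply hne
    rcases hS with ⟨hSne, e, heE, rfl⟩ | ⟨hSne, e₁, he₁, e₂, he₂, h12, rfl⟩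
    · rcases hS' with ⟨hS'ne, e', he'E, rfl⟩ | ⟨hS'ne, f₁, hf₁, f₂, hf₂, hf12, rfl⟩
      · by_cases h : e = e'
        · rw [h]
        · exact absurd hvS'.1 (hvS.2 e' he'E (fun h' => h h'.symm))
      · exfalso
        by_cases h : f₁ = e
        · exact hvS.2 f₂ hf₂ (fun h' => hf12 (h.trans h'.symm)) hvS'.2
        · exact hvS.2 f₁ hf₁ h hvS'.1
    · rcases hS' with ⟨hS'ne, e', he'E, rfl⟩ | ⟨hS'ne, f₁, hf₁, f₂, hf₂, hf12, rfl⟩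
      · exfalso
        by_cases h : e₁ = e'
        · exact hvS'.2 e₂ he₂ (fun h' => h12 (h.trans h'.symm)) hvS.2
        · exact hvS'.2 e₁ he₁ h hvS.1
      · apply Set.Subset.antisymm
        · have h1 := hord e₁ he₁ e₂ he₂ h12 ⟨v, hvS⟩ f₁ hf₁
          have h2 := hord e₁ he₁ e₂ he₂ h12 ⟨v, hvS⟩ f₂ hf₂
          rcases h1 with h1 | h1
          · rcases h2 with h2 | h2
            · exact Set.subset_inter h1 h2
            · exact absurd (Set.ext_iff.1 h2 v) (by simp [hvS, hvS'.2])
          · exact absurd (Set.ext_iff.1 h1 v) (by simp [hvS, hvS'.1])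
        · have h1 := hord f₁ hf₁ f₂ hf₂ hf12 ⟨v, hvS'⟩ e₁ he₁
          have h2 := hord f₁ hf₁ f₂ hf₂ hf12 ⟨v, hvS'⟩ e₂ he₂
          rcases h1 with h1 | h1
          · rcases h2 with h2 | h2
            · exact Set.subset_inter h1 h2
            · exact absurd (Set.ext_iff.1 h2 v) (by simp [hvS', hvS.2])
          · exact absurd (Set.ext_iff.1 h1 v) (by simp [hvS', hvS.1])
  · ext v
    simp only [Set.mem_sUnion, Set.mem_univ, iff_true]
    obtain ⟨e, heE, hve⟩ := hcover v
    by_cases h : ∀ e' ∈ E, e' ≠ e → v ∉ e'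
    · exact ⟨PrivateVerts E e, Or.inl ⟨⟨v, hve, h⟩, e, heE, rfl⟩, hve, h⟩
    · push_neg at h
      obtain ⟨e', he'E, hne, hve'⟩ := h
      exact ⟨e ∩ e', Or.inr ⟨⟨v, hve, hve'⟩, e, heE, e', he'E, fun h' => hne h'.symm, rfl⟩,
        hve, hve'⟩
end

section
/- Let H=(V,E) be a connected orderly hypergraph and let v, v' be two distinct vertices that lie in the same part of the canonical partition of V, i.e., either v, v' ∈ P_H(e) for the same edge e ∈ E, or v, v' ∈ e ∩ e' for the same pair of distinct edges e, e' ∈ E. Then d_H(v,x) = d_H(v',x) for every vertex x ∈ V with x ≠ v and x ≠ v'. -/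
open Set

variable {V : Type*}

/-- Key lemma: if every edge containing `v` also contains `v'`, then
`hDist E v' x ≤ hDist E v x` for `x ≠ v, v'`. -/
theorem key_le {V : Type*} (E : Set (Set V)) (hconn : HConnected E)
    (v v' x : V) (hvv : v ≠ v') (hxv : x ≠ v) (hxv' : x ≠ v')
    (hco : ∀ f ∈ E, v ∈ f → v' ∈ f) : hDist E v' x ≤ hDist E v x := by
  have main : ∀ d : ℕ, (∃ w : Fin (d + 1) → V, ∃ e : Fin d → Set V,
      IsHPath E d w e ∧ w 0 = v ∧ w (Fin.last d) = x) → hDist E v' x ≤ d := by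
    rintro d ⟨vf, ef, ⟨hvi, hei, heE, hinc⟩, h0, hl⟩
    have hd : 0 < d := by
      rcases Nat.eq_zero_or_pos d with h | h
      · exfalso; subst h; exact hxv (hl ▸ h0 ▸ rfl)
      · exact h
    by_cases hr : ∃ j, vf j = v'
    · obtain ⟨j, hj⟩ := hr
      have hj0 : j.val ≠ 0 := by
        intro h
        apply hvv
        rw [← h0, ← hj]
        congr 1
        exact Fin.ext h.symm
      have hjd : j.val < d := by
        have : j ≠ Fin.last d := by
          intro h; exact hxv' (by rw [← hl, ← hj, h])
        have := Fin.lt_last_iff_ne_last.mpr this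
        exact this
      set k := j.val with hk
      refine le_trans (Nat.sInf_le ?_) (by omega : d - k ≤ d)
      refine ⟨fun i => vf ⟨k + i.val, by omega⟩, fun i => ef ⟨k + i.val, by omega⟩,
        ⟨?_, ?_, ?_, ?_⟩, ?_, ?_⟩
      · intro a b hab
        have := congrArg Fin.val (hvi hab)
        simp only at this
        exact Fin.ext (by omega)
      · intro a b hab
        have := congrArg Fin.val (hei hab)
        simp only at this
        exact Fin.ext (by omega)
      · intro i; exact heE _
      · intro i
        have h1 := (hinc ⟨k + i.val, by omega⟩).1
        have h2 := (hinc ⟨k + i.val, by omega⟩).2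
        constructor
        · convert h1 using 2
          try simp [Fin.ext_iff]
        · convert h2 using 2
          try simp [Fin.ext_iff]
          omega
      · simp only
        rw [← hj]
        congr 1
        try simp [Fin.ext_iff]
      · simp only
        rw [← hl]
        congr 1
        simp [Fin.ext_iff]
        omega
    · push_neg at hr
      refine le_trans (Nat.sInf_le ?_) (le_refl d)
      refine ⟨Function.update vf 0 v', ef, ⟨?_, hei, heE, ?_⟩, ?_, ?_⟩
      · intro a b hab
        rcases eq_or_ne a 0 with ha | ha <;> rcases eq_or_ne b 0 with hb | hb
        · rw [ha, hb]
        · exfalso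
          rw [ha, Function.update_self, Function.update_of_ne hb] at hab
          exact hr b hab.symm
        · exfalso
          rw [hb, Function.update_self, Function.update_of_ne ha] at hab
          exact hr a hab
        · rw [Function.update_of_ne ha, Function.update_of_ne hb] at hab
          exact hvi hab
      · intro i
        constructor
        · by_cases hi : i.castSucc = (0 : Fin (d + 1))
          · rw [hi, Function.update_self]
            apply hco (ef i) (heE i)
            have := (hinc i).1
            rwa [hi, h0] at this
          · rw [Function.update_of_ne hi]
            exact (hinc i).1
        · rw [Function.update_of_ne (Fin.succ_ne_zero i)]
          exact (hinc i).2
      · rw [Function.update_self]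
      · have : Fin.last d ≠ 0 := by
          simp [Fin.ext_iff]; omega
        rw [Function.update_of_ne this]
        exact hl
  obtain ⟨t, vf, ef, hp, h0, hl⟩ := hconn v x
  have hne : Set.Nonempty {t | ∃ w : Fin (t + 1) → V, ∃ e : Fin t → Set V,
      IsHPath E t w e ∧ w 0 = v ∧ w (Fin.last t) = x} := ⟨t, vf, ef, hp, h0, hl⟩
  exact main _ (Nat.sInf_mem hne)

theorem same_edges {V : Type*} (E : Set (Set V)) (hord : Orderly E) (v v' : V)
    (hsame : (∃ e ∈ E, v ∈ PrivateVerts E e ∧ v' ∈ PrivateVerts E e) ∨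
      (∃ e ∈ E, ∃ e' ∈ E, e ≠ e' ∧ v ∈ e ∩ e' ∧ v' ∈ e ∩ e')) :
    ∀ f ∈ E, v ∈ f → v' ∈ f := by
  intro f hf hvf
  rcases hsame with ⟨e, he, ⟨hve, hvp⟩, ⟨hv'e, _⟩⟩ | ⟨e, he, e', he', hee, ⟨hv1, hv2⟩, ⟨hv'1, hv'2⟩⟩
  · rcases eq_or_ne f e with h | h
    · exact h ▸ hv'e
    · exact absurd hvf (hvp f hf h)
  · rcases hord e he e' he' hee ⟨v, hv1, hv2⟩ f hf with h | h
    · exact h ⟨hv'1, hv'2⟩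
    · have hm : v ∈ (e ∩ e') ∩ f := ⟨⟨hv1, hv2⟩, hvf⟩
      rw [h] at hm
      exact absurd hm (by exact id)

/-- In a connected orderly hypergraph, two distinct vertices lying in the
same part of the canonical partition (both private to the same edge, or both in the
intersection of the same pair of distinct edges) are at the same distance from every
third vertex. -/
theorem stmt_1 {V : Type*} [Fintype V] (E : Set (Set V))
    (hcard : ∀ e ∈ E, 2 ≤ e.ncard) (hord : Orderly E) (hconn : HConnected E)
    (v v' : V) (hvv : v ≠ v')
    (hsame : (∃ e ∈ E, v ∈ PrivateVerts E e ∧ v' ∈ PrivateVerts E e) ∨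
      (∃ e ∈ E, ∃ e' ∈ E, e ≠ e' ∧ v ∈ e ∩ e' ∧ v' ∈ e ∩ e')) :
    ∀ x : V, x ≠ v → x ≠ v' → hDist E v x = hDist E v' x := by
  intro x hxv hxv'
  have hco : ∀ f ∈ E, v ∈ f → v' ∈ f := same_edges E hord v v' hsame
  have hsame' : (∃ e ∈ E, v' ∈ PrivateVerts E e ∧ v ∈ PrivateVerts E e) ∨
      (∃ e ∈ E, ∃ e' ∈ E, e ≠ e' ∧ v' ∈ e ∩ e' ∧ v ∈ e ∩ e') := by
    rcases hsame with ⟨e, he, h1, h2⟩ | ⟨e, he, e', he', hee, h1, h2⟩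
    · exact Or.inl ⟨e, he, h2, h1⟩
    · exact Or.inr ⟨e, he, e', he', hee, h2, h1⟩
  have hco' : ∀ f ∈ E, v' ∈ f → v ∈ f := same_edges E hord v' v hsame'
  exact le_antisymm (key_le E hconn v' v x hvv.symm hxv' hxv hco')
    (key_le E hconn v v' x hvv hxv hxv' hco)
end

section
/- Every connected orderly hypertree without nested edges is β-acyclic. -/
open Set

variable {V : Type*}

section Aux
open SimpleGraph

private lemma exists_walk_in {V : Type*} (T : SimpleGraph V) {e : Set V}
    (h : (T.induce e).Connected) {x y : V} (hx : x ∈ e) (hy : y ∈ e) :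
    ∃ w : T.Walk x y, ∀ v ∈ w.support, v ∈ e := by
  obtain ⟨w⟩ := h.preconnected ⟨x, hx⟩ ⟨y, hy⟩
  refine ⟨w.map (SimpleGraph.Embedding.induce e).toHom, ?_⟩
  intro v hv
  have hv : v ∈ (w.map (SimpleGraph.Embedding.induce e).toHom).support := hv
  rw [SimpleGraph.Walk.support_map, List.mem_map] at hv
  obtain ⟨s, _, rfl⟩ := hv
  exact s.2

private lemma cut_not_reachable {V : Type*} [DecidableEq V] {T : SimpleGraph V} (hT : T.IsTree) {x y : V}
    {d : Sym2 V} (p : T.Walk x y) (hp : p.IsPath) (hd : d ∈ p.edges) :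
    ¬ (T.deleteEdges {d}).Reachable x y := by
  rintro ⟨w⟩
  have hble : ∀ e ∈ w.bypass.edges, e ∈ T.edgeSet := by
    intro e he
    have := w.bypass.edges_subset_edgeSet he
    rw [SimpleGraph.edgeSet_deleteEdges] at this
    exact this.1
  have hd' : d ∉ w.bypass.edges := by
    intro hdb
    have := w.bypass.edges_subset_edgeSet hdb
    rw [SimpleGraph.edgeSet_deleteEdges] at this
    exact this.2 rfl
  obtain ⟨P, hP, huniq⟩ := hT.existsUnique_path x y
  have h1 : p = P := huniq p hp
  have h2 : w.bypass.transfer T hble = P := huniq _ (w.bypass_isPath.transfer hble)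
  apply hd'
  rw [← SimpleGraph.Walk.edges_transfer w.bypass hble, h2, ← h1]
  exact hd

private lemma cut_must_use {V : Type*} {T : SimpleGraph V} {x y : V} {d : Sym2 V}
    (h : ¬ (T.deleteEdges {d}).Reachable x y) (w : T.Walk x y) : d ∈ w.edges := by
  by_contra hd
  exact h ⟨w.toDeleteEdge d hd⟩

private lemma exists_boundary {V : Type*} {T : SimpleGraph V} {S : Set V} :
    ∀ {x y : V} (p : T.Walk x y), x ∉ S → y ∈ S →
      ∃ a b, a ∈ S ∧ b ∉ S ∧ s(b, a) ∈ p.edges := by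
  intro x y p
  induction p with
  | nil => exact fun hx hy => absurd hy hx
  | @cons u v w hadj q ih =>
    intro hx hy
    by_cases hv : v ∈ S
    · exact ⟨v, u, hv, hx, by simp⟩
    · obtain ⟨a, b, ha, hb, hab⟩ := ih hv hy
      exact ⟨a, b, ha, hb, by simp [hab]⟩

private lemma key_lemma {V : Type*} [DecidableEq V] {T : SimpleGraph V} (hT : T.IsTree) {f g S : Set V}
    (hf : (T.induce f).Connected) (hg : (T.induce g).Connected)
    {p q r : V} (hpf : p ∈ f) (hpS : p ∉ S) (hrf : r ∈ f) (hrS : r ∈ S)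
    (hqg : q ∈ g) (hrg : r ∈ g)
    (hfg : ∀ v, v ∈ f → v ∈ g → v ∈ S)
    (hreach : ∀ a ∈ S, ∀ b : V, (T.deleteEdges {s(b, a)}).Reachable q p) :
    False := by
  obtain ⟨w, hw⟩ := exists_walk_in T hf hpf hrf
  have hPp : w.bypass.IsPath := w.bypass_isPath
  have hPsup : ∀ v ∈ w.bypass.support, v ∈ f := fun v hv => hw v (w.support_bypass_subset hv)
  obtain ⟨a, b, haS, hbS, hd⟩ := exists_boundary w.bypass hpS hrS
  have hnr : ¬ (T.deleteEdges {s(b, a)}).Reachable p r := cut_not_reachable hT w.bypass hPp hd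
  have h2 : (T.deleteEdges {s(b, a)}).Reachable q p := hreach a haS b
  have hnrq : ¬ (T.deleteEdges {s(b, a)}).Reachable r q := fun h => hnr (h.trans h2).symm
  obtain ⟨w', hw'⟩ := exists_walk_in T hg hrg hqg
  have hd' : s(b, a) ∈ w'.edges := cut_must_use hnrq w'
  have hbg : b ∈ g := hw' b (w'.fst_mem_support_of_mem_edges hd')
  have hbf : b ∈ f := hPsup b (w.bypass.fst_mem_support_of_mem_edges hd)
  exact hbS (hfg b hbf hbg)


private lemma conformal_main {V : Type*} [Fintype V] {E : Set (Set V)} {T : SimpleGraph V}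
    (hT : T.IsTree) (hind : ∀ e ∈ E, (T.induce e).Connected) (hord : Orderly E) :
    HyperConformal E := by
  classical
  intro U hU hpair
  have hUfin : U.Finite := Set.toFinite U
  -- one-step extension
  have step : ∀ W : Set V, W ⊆ U → W.Nonempty → (∃ e ∈ E, W ⊆ e) → ∀ z ∈ U, z ∉ W →
      ∃ e ∈ E, insert z W ⊆ e := by
    rintro W hWU ⟨w1, hw1⟩ ⟨e, heE, hWe⟩ z hzU hzW
    by_contra hno
    push_neg at hno
    obtain ⟨f, hfE, hw1f, hzf⟩ := hpair w1 (hWU hw1) z hzU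
    by_cases hWf : ∀ w ∈ W, w ∈ f
    · refine hno f hfE ?_ |>.elim
      intro v hv
      rcases hv with rfl | hv
      · exact hzf
      · exact hWf v hv
    · push_neg at hWf
      obtain ⟨w2, hw2, hw2f⟩ := hWf
      obtain ⟨g, hgE, hw2g, hzg⟩ := hpair w2 (hWU hw2) z hzU
      have hfg : f ≠ g := fun h => hw2f (h ▸ hw2g)
      have hze : z ∉ e := fun hze => hno e heE (insert_subset hze hWe)
      rcases hord f hfE g hgE hfg ⟨z, hzf, hzg⟩ e heE with hsub | hdisj
      · exact hze (hsub ⟨hzf, hzg⟩)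
      · -- geometric contradiction
        have haine : ∀ v, v ∈ f ∩ g → v ∉ e := by
          intro v hv hve
          have : v ∈ (f ∩ g) ∩ e := ⟨hv, hve⟩
          rw [hdisj] at this
          exact this
        refine key_lemma hT (hind f hfE) (hind g hgE) (S := f ∩ g)
          (p := w1) (q := w2) (r := z) hw1f ?_ hzf ⟨hzf, hzg⟩ hw2g hzg
          (fun v hvf hvg => ⟨hvf, hvg⟩) ?_
        · exact fun h => haine w1 h (hWe hw1)
        · intro a ha b
          obtain ⟨wk, hwk⟩ := exists_walk_in T (hind e heE) (hWe hw2) (hWe hw1)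
          have hna : s(b, a) ∉ wk.edges := fun h =>
            haine a ha (hwk a (wk.snd_mem_support_of_mem_edges h))
          exact ⟨wk.toDeleteEdge _ hna⟩
  -- grow a maximal covered set
  have main : ∀ k : ℕ, ∀ W : Set V, W ⊆ U → W.Nonempty → (∃ e ∈ E, W ⊆ e) →
      U.ncard ≤ W.ncard + k → ∃ e ∈ E, U ⊆ e := by
    intro k
    induction k with
    | zero =>
      rintro W hWU _ ⟨e, heE, hWe⟩ hcard
      have : W = U := Set.eq_of_subset_of_ncard_le hWU (by omega) hUfin
      exact ⟨e, heE, this ▸ hWe⟩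
    | succ k ih =>
      intro W hWU hWne hWe hcard
      by_cases hUW : U ⊆ W
      · obtain ⟨e, heE, hWe⟩ := hWe
        exact ⟨e, heE, hUW.trans hWe⟩
      · obtain ⟨z, hzU, hzW⟩ := not_subset.mp hUW
        obtain ⟨e', he'E, he'⟩ := step W hWU hWne hWe z hzU hzW
        refine ih (insert z W) (insert_subset hzU hWU) ⟨z, mem_insert _ _⟩ ⟨e', he'E, he'⟩ ?_
        rw [Set.ncard_insert_of_notMem hzW (hUfin.subset hWU)]
        omega
  obtain ⟨x, hxU⟩ : U.Nonempty := Set.nonempty_of_ncard_ne_zero (by omega)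
  obtain ⟨e, heE, hxe, -⟩ := hpair x hxU x hxU
  exact main U.ncard {x} (singleton_subset_iff.mpr hxU) ⟨x, rfl⟩
    ⟨e, heE, singleton_subset_iff.mpr hxe⟩ (by rw [Set.ncard_singleton]; omega)


open Fin.NatCast in
private lemma fagin_main {V : Type*} {E : Set (Set V)} {T : SimpleGraph V}
    (hT : T.IsTree) (hind : ∀ e ∈ E, (T.induce e).Connected) (hord : Orderly E) :
    FaginAcyclic E := by
  classical
  rintro ⟨t, u, hinj, hcyc⟩
  have hmem : ∀ i : Fin (t + 3), ({u i, u (i + 1)} : Set V) ∈ InducedH E (Set.range u) := by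
    intro i
    rw [hcyc]
    exact ⟨i, rfl⟩
  choose F hFE hFeq using fun i => (hmem i).2
  -- Fin arithmetic helpers
  have hvk : ∀ k : ℕ, k < t + 3 → ((k : Fin (t + 3))).val = k := by
    intro k hk
    rw [Fin.val_natCast]
    exact Nat.mod_eq_of_lt hk
  have hne : ∀ k l : ℕ, k < t + 3 → l < t + 3 → k ≠ l →
      (k : Fin (t + 3)) ≠ (l : Fin (t + 3)) := by
    intro k l hk hl hkl h
    apply hkl
    have := congrArg Fin.val h
    rwa [hvk k hk, hvk l hl] at this
  have h0 : ((0 : ℕ) : Fin (t + 3)) = 0 := by norm_cast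
  have h1 : ((1 : ℕ) : Fin (t + 3)) = 1 := by norm_cast
  have h2 : ((2 : ℕ) : Fin (t + 3)) = 2 := by norm_cast
  have h01 : (0 : Fin (t + 3)) ≠ 1 := by
    rw [← h0, ← h1]; exact hne 0 1 (by omega) (by omega) (by omega)
  have h02 : (0 : Fin (t + 3)) ≠ 2 := by
    rw [← h0, ← h2]; exact hne 0 2 (by omega) (by omega) (by omega)
  have h12 : (1 : Fin (t + 3)) ≠ 2 := by
    rw [← h1, ← h2]; exact hne 1 2 (by omega) (by omega) (by omega)
  have hadd1 : (0 : Fin (t + 3)) + 1 = 1 := zero_add 1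
  have hadd2 : (1 : Fin (t + 3)) + 1 = 2 := by
    rw [← h1, ← h2]
    norm_cast
  -- membership facts
  have hmem1 : ∀ i, u i ∈ F i := by
    intro i
    have h : u i ∈ ({u i, u (i + 1)} : Set V) := Or.inl rfl
    rw [hFeq i] at h
    exact h.1
  have hmem2 : ∀ i, u (i + 1) ∈ F i := by
    intro i
    have h : u (i + 1) ∈ ({u i, u (i + 1)} : Set V) := Or.inr rfl
    rw [hFeq i] at h
    exact h.1
  have hmem3 : ∀ i k, u k ∈ F i → k = i ∨ k = i + 1 := by
    intro i k hk
    have h : u k ∈ F i ∩ Set.range u := ⟨hk, ⟨k, rfl⟩⟩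
    rw [← hFeq i] at h
    rcases h with h | h
    · exact Or.inl (hinj h)
    · exact Or.inr (hinj h)
  -- F 0 ≠ F 1
  have hF01 : F 0 ≠ F 1 := by
    intro h
    have : u (1 + 1) ∈ F 0 := h ▸ hmem2 1
    rcases hmem3 0 (1 + 1) this with h' | h'
    · rw [hadd2] at h'; exact h02 h'.symm
    · rw [hadd2, hadd1] at h'; exact h12 h'.symm
  have hu1S : u 1 ∈ F 0 ∩ F 1 := ⟨hadd1 ▸ hmem2 0, hmem1 1⟩
  -- disjointness of S = F 0 ∩ F 1 from other edges
  have hdisj : ∀ j : Fin (t + 3), j ≠ 0 → j ≠ 1 → ∀ v ∈ F 0 ∩ F 1, v ∉ F j := by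
    intro j hj0 hj1 v hv hvj
    rcases hord (F 0) (hFE 0) (F 1) (hFE 1) hF01 ⟨u 1, hu1S⟩ (F j) (hFE j) with h | h
    · rcases hmem3 j (1 : Fin (t + 3)) (h hu1S) with h' | h'
      · exact hj1 h'.symm
      · apply hj0
        have := hadd1 ▸ h'
        exact add_right_cancel this.symm
    · have : v ∈ (F 0 ∩ F 1) ∩ F j := ⟨hv, hvj⟩
      rw [h] at this
      exact this
  -- the long-way-around reachability
  have hreach : ∀ a ∈ F 0 ∩ F 1, ∀ b : V,
      (T.deleteEdges {s(b, a)}).Reachable (u 2) (u 0) := by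
    intro a ha b
    set D := T.deleteEdges {s(b, a)} with hD
    have step : ∀ j : Fin (t + 3), j ≠ 0 → j ≠ 1 → D.Reachable (u j) (u (j + 1)) := by
      intro j hj0 hj1
      obtain ⟨wj, hwj⟩ := exists_walk_in T (hind _ (hFE j)) (hmem1 j) (hmem2 j)
      have hna : s(b, a) ∉ wj.edges := fun h =>
        hdisj j hj0 hj1 a ha (hwj a (wj.snd_mem_support_of_mem_edges h))
      exact ⟨wj.toDeleteEdge _ hna⟩
    have chainN : ∀ k : ℕ, k ≤ t + 1 →
        D.Reachable (u 2) (u ((2 + k : ℕ) : Fin (t + 3))) := by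
      intro k
      induction k with
      | zero =>
        intro _
        have he : ((2 + 0 : ℕ) : Fin (t + 3)) = 2 := by norm_num [h2]
        rw [he]
      | succ k ih =>
        intro hk
        have hlt : 2 + k < t + 3 := by omega
        have hr1 := ih (by omega)
        have hj0 : ((2 + k : ℕ) : Fin (t + 3)) ≠ 0 := by
          rw [← h0]; exact hne _ 0 hlt (by omega) (by omega)
        have hj1 : ((2 + k : ℕ) : Fin (t + 3)) ≠ 1 := by
          rw [← h1]; exact hne _ 1 hlt (by omega) (by omega)
        have hr2 := step _ hj0 hj1
        have hcast : ((2 + k : ℕ) : Fin (t + 3)) + 1 = ((2 + (k + 1) : ℕ) : Fin (t + 3)) := by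
          exact (Nat.cast_succ (R := Fin (t+3)) (2+k)).symm
        rw [hcast] at hr2
        exact hr1.trans hr2
    have := chainN (t + 1) le_rfl
    rwa [show ((2 + (t + 1) : ℕ) : Fin (t + 3)) = 0 from by
      rw [show 2 + (t + 1) = t + 3 from by omega]
      exact Fin.natCast_self _] at this
  -- final contradiction via key_lemma
  have hp0S : u 0 ∉ F 0 ∩ F 1 := by
    intro h
    rcases hmem3 1 0 h.2 with h' | h'
    · exact h01 h'
    · rw [hadd2] at h'; exact h02 h'
  exact key_lemma hT (hind _ (hFE 0)) (hind _ (hFE 1)) (S := F 0 ∩ F 1)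
    (p := u 0) (q := u 2) (r := u 1)
    (hmem1 0) hp0S (hadd1 ▸ hmem2 0) hu1S (hadd2 ▸ hmem2 1) (hmem1 1)
    (fun v hvf hvg => ⟨hvf, hvg⟩) hreach

end Aux

/-- Every connected orderly hypertree without nested edges is β-acyclic. -/
theorem stmt_3 {V : Type*} [Fintype V] (E : Set (Set V))
    (hcard : ∀ e ∈ E, 2 ≤ e.ncard) (hconn : HConnected E) (hnest : NoNestedEdges E)
    (hord : Orderly E) (htree : IsHypertree E) :
    BetaAcyclic E := by
  rintro E' hE'
  obtain ⟨T, hT, hind⟩ := htree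
  have hord' : Orderly E' := fun e1 h1 e2 h2 hne hS e he =>
    hord e1 (hE' h1) e2 (hE' h2) hne hS e (hE' he)
  have hind' : ∀ e ∈ E', (T.induce e).Connected := fun e he => hind e (hE' he)
  exact ⟨fagin_main hT hind' hord', conformal_main hT hind' hord'⟩
end

section
/- Every connected orderly hypertree H=(V,E) without nested edges is γ-acyclic; that is, H is β-acyclic and there do not exist pairwise distinct vertices x, y, z ∈ V such that {{x,y},{y,z},{x,y,z}} ⊆ H[{x,y,z}]. -/
open Set

variable {V : Type*}

section TreeAux

variable {V : Type*} {T : SimpleGraph V}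

/-- Along a path ending in `R`, there is a first vertex in `R`. -/
lemma exists_first_in {R : Set V} :
    ∀ {a b : V} (w : T.Walk a b), w.IsPath → b ∈ R →
    ∃ (m : V) (w' : T.Walk a m), m ∈ R ∧ w'.IsPath ∧
      (∀ x ∈ w'.support, x ∈ w.support) ∧ (∀ x ∈ w'.support, x ∈ R → x = m) := by
  intro a b w
  induction w with
  | nil =>
    intro _ hb
    exact ⟨_, SimpleGraph.Walk.nil, hb, SimpleGraph.Walk.IsPath.nil, by simp, by simp⟩
  | @cons a' y b' h w ih =>
    intro hp hb
    by_cases ha : a' ∈ R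
    · refine ⟨a', SimpleGraph.Walk.nil, ha, SimpleGraph.Walk.IsPath.nil, ?_, by simp⟩
      intro x hx
      simp only [SimpleGraph.Walk.support_nil, List.mem_singleton] at hx
      subst hx
      exact SimpleGraph.Walk.start_mem_support _
    · obtain ⟨m, w', hm, hw'p, hsub, huniq⟩ := ih hp.of_cons hb
      refine ⟨m, SimpleGraph.Walk.cons h w', hm, ?_, ?_, ?_⟩
      · rw [SimpleGraph.Walk.cons_isPath_iff]
        refine ⟨hw'p, fun hmem => ?_⟩
        exact ((SimpleGraph.Walk.cons_isPath_iff h w).mp hp).2 (hsub a' hmem)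
      · intro x hx
        rw [SimpleGraph.Walk.support_cons, List.mem_cons] at hx ⊢
        exact hx.imp id (fun hx' => hsub x hx')
      · intro x hx hxR
        rw [SimpleGraph.Walk.support_cons, List.mem_cons] at hx
        rcases hx with rfl | hx
        · exact absurd hxR ha
        · exact huniq x hx hxR

/-- Median lemma: any three paths joining three vertices of a tree pairwise
have a common vertex. -/
lemma tree_median (hac : T.IsAcyclic) {a b c : V}
    (p : T.Walk a b) (hp : p.IsPath) (q : T.Walk b c) (hq : q.IsPath)
    (r : T.Walk a c) (hr : r.IsPath) :
    ∃ m, m ∈ p.support ∧ m ∈ q.support ∧ m ∈ r.support := by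
  classical
  obtain ⟨m, w', hmR, hw'p, hsub, huniq⟩ :=
    exists_first_in (R := {x | x ∈ r.support}) p.reverse hp.reverse r.start_mem_support
  have hmr : m ∈ r.support := hmR
  have hr2p : (r.dropUntil m hmr).IsPath := hr.dropUntil hmr
  have hmnotail : m ∉ (r.dropUntil m hmr).support.tail := by
    have hn : (r.dropUntil m hmr).support.Nodup := (SimpleGraph.Walk.isPath_def _).1 hr2p
    rw [SimpleGraph.Walk.support_eq_cons] at hn
    exact (List.nodup_cons.mp hn).1
  have hkey : ∀ x ∈ w'.support, x ∉ (r.dropUntil m hmr).support.tail := by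
    intro x hx hx2
    have hxr : x ∈ r.support :=
      r.support_dropUntil_subset hmr (List.mem_of_mem_tail hx2)
    have hxm : x = m := huniq x hx hxr
    subst hxm
    exact hmnotail hx2
  have hw2 : (w'.append (r.dropUntil m hmr)).IsPath := by
    rw [SimpleGraph.Walk.isPath_def, SimpleGraph.Walk.support_append]
    refine List.Nodup.append ((SimpleGraph.Walk.isPath_def _).1 hw'p) ?_ hkey
    have hn : (r.dropUntil m hmr).support.Nodup := (SimpleGraph.Walk.isPath_def _).1 hr2p
    exact hn.tail
  have hqe : q = w'.append (r.dropUntil m hmr) := by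
    have := hac.path_unique ⟨q, hq⟩ ⟨w'.append (r.dropUntil m hmr), hw2⟩
    exact congrArg Subtype.val this
  refine ⟨m, ?_, ?_, hmr⟩
  · have := hsub m (SimpleGraph.Walk.end_mem_support w')
    rwa [SimpleGraph.Walk.support_reverse, List.mem_reverse] at this
  · rw [hqe]
    exact SimpleGraph.Walk.subset_support_append_left _ _
      (SimpleGraph.Walk.end_mem_support w')

/-- In a set inducing a connected subgraph, any two vertices are joined by a walk
staying inside the set. -/
lemma walk_in_subtree {e : Set V} (hc : (T.induce e).Connected)
    {a b : V} (ha : a ∈ e) (hb : b ∈ e) :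
    ∃ w : T.Walk a b, ∀ x ∈ w.support, x ∈ e := by
  obtain ⟨w0⟩ := hc.preconnected ⟨a, ha⟩ ⟨b, hb⟩
  refine ⟨w0.map (SimpleGraph.Embedding.induce e).toHom, ?_⟩
  intro x hx
  erw [SimpleGraph.Walk.support_map, List.mem_map] at hx
  obtain ⟨y, -, rfl⟩ := hx
  exact y.2

lemma path_in_subtree {e : Set V} (hc : (T.induce e).Connected)
    {a b : V} (ha : a ∈ e) (hb : b ∈ e) :
    ∃ w : T.Walk a b, w.IsPath ∧ ∀ x ∈ w.support, x ∈ e := by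
  classical
  obtain ⟨w, hw⟩ := walk_in_subtree hc ha hb
  exact ⟨w.toPath, w.toPath.2, fun x hx => hw x (w.support_toPath_subset hx)⟩

end TreeAux

section MainAux

variable {V : Type*}

lemma triple_lemma {E : Set (Set V)} (hord : Orderly E)
    {T : SimpleGraph V} (hT : T.IsTree) (hsub : ∀ e ∈ E, (T.induce e).Connected)
    {a b c : Set V} (haE : a ∈ E) (hbE : b ∈ E) (hcE : c ∈ E)
    {x y z : V} (hxa : x ∈ a) (hya : y ∈ a) (hyb : y ∈ b) (hzb : z ∈ b)
    (hxc : x ∈ c) (hzc : z ∈ c) : a = b ∨ y ∈ c := by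
  by_cases hab : a = b
  · exact Or.inl hab
  right
  obtain ⟨p, hp, hpa⟩ := path_in_subtree (hsub a haE) hxa hya
  obtain ⟨q, hq, hqb⟩ := path_in_subtree (hsub b hbE) hyb hzb
  obtain ⟨r, hr, hrc⟩ := path_in_subtree (hsub c hcE) hxc hzc
  obtain ⟨m, hmp, hmq, hmr⟩ := tree_median hT.IsAcyclic p hp q hq r hr
  rcases hord a haE b hbE hab ⟨y, hya, hyb⟩ c hcE with hsc | hdisj
  · exact hsc ⟨hya, hyb⟩
  · exact absurd hdisj
      (Set.Nonempty.ne_empty ⟨m, ⟨hpa m hmp, hqb m hmq⟩, hrc m hmr⟩)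

lemma conformal_aux [Fintype V] {E : Set (Set V)} (hord : Orderly E)
    {T : SimpleGraph V} (hT : T.IsTree) (hsub : ∀ e ∈ E, (T.induce e).Connected)
    {E' : Set (Set V)} (hE' : E' ⊆ E) : HyperConformal E' := by
  have key : ∀ n (U : Set V), U.ncard = n → 2 ≤ U.ncard →
      (∀ x ∈ U, ∀ y ∈ U, ∃ e ∈ E', x ∈ e ∧ y ∈ e) → ∃ e ∈ E', U ⊆ e := by
    intro n
    induction n using Nat.strong_induction_on with
    | _ n ih =>
      intro U hn h2 hcov
      rcases eq_or_lt_of_le h2 with h2' | h3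
      · obtain ⟨x, y, hxy, rfl⟩ := Set.ncard_eq_two.mp h2'.symm
        obtain ⟨e, heE', hx, hy⟩ := hcov x (by simp) y (by simp)
        refine ⟨e, heE', ?_⟩
        intro v hv
        rcases hv with rfl | rfl
        exacts [hx, hy]
      · have hfin : U.Finite := Set.toFinite U
        obtain ⟨aV, haU⟩ : U.Nonempty := by
          rw [← Set.ncard_pos hfin]; omega
        have hca : (U \ {aV}).ncard = U.ncard - 1 :=
          Set.ncard_diff_singleton_of_mem haU
        obtain ⟨bV, hbU⟩ : (U \ {aV}).Nonempty := by
          rw [← Set.ncard_pos hfin.diff]; omega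
        have hcb : ((U \ {aV}) \ {bV}).ncard = U.ncard - 2 := by
          rw [Set.ncard_diff_singleton_of_mem hbU, hca]
          omega
        obtain ⟨cV, hcU⟩ : ((U \ {aV}) \ {bV}).Nonempty := by
          rw [← Set.ncard_pos hfin.diff.diff]; omega
        simp only [Set.mem_diff, Set.mem_singleton_iff] at hbU hcU
        have hbUU : bV ∈ U := hbU.1
        have hcUU : cV ∈ U := hcU.1.1
        have hcbne : (U \ {bV}).ncard = U.ncard - 1 :=
          Set.ncard_diff_singleton_of_mem hbUU
        have hcov1 : ∀ x ∈ U \ {aV}, ∀ y ∈ U \ {aV}, ∃ e ∈ E', x ∈ e ∧ y ∈ e :=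
          fun x hx y hy => hcov x hx.1 y hy.1
        have hcov2 : ∀ x ∈ U \ {bV}, ∀ y ∈ U \ {bV}, ∃ e ∈ E', x ∈ e ∧ y ∈ e :=
          fun x hx y hy => hcov x hx.1 y hy.1
        obtain ⟨e1, he1, hU1⟩ :=
          ih (n - 1) (by omega) (U \ {aV}) (by rw [hca, hn]) (by rw [hca, hn]; omega) hcov1
        obtain ⟨e2, he2, hU2⟩ :=
          ih (n - 1) (by omega) (U \ {bV}) (by rw [hcbne, hn]) (by rw [hcbne, hn]; omega) hcov2
        by_cases haa : aV ∈ e1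
        · refine ⟨e1, he1, fun v hv => ?_⟩
          by_cases hva : v = aV
          · exact hva ▸ haa
          · exact hU1 ⟨hv, hva⟩
        by_cases hbb : bV ∈ e2
        · refine ⟨e2, he2, fun v hv => ?_⟩
          by_cases hvb : v = bV
          · exact hvb ▸ hbb
          · exact hU2 ⟨hv, hvb⟩
        have hne12 : e1 ≠ e2 := by
          intro h
          exact haa (h ▸ hU2 ⟨haU, fun hh => hbU.2 hh.symm⟩)
        obtain ⟨ga, hga, haga, hcga⟩ := hcov aV haU cV hcUU
        obtain ⟨gb, hgb, hcgb, hbgb⟩ := hcov cV hcUU bV hbUU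
        obtain ⟨gc, hgc, hagc, hbgc⟩ := hcov aV haU bV hbUU
        have htr := triple_lemma hord hT hsub (hE' hga) (hE' hgb) (hE' hgc)
          haga hcga hcgb hbgb hagc hbgc
        obtain ⟨e3, he3, ha3, hb3, hc3⟩ :
            ∃ e3 ∈ E', aV ∈ e3 ∧ bV ∈ e3 ∧ cV ∈ e3 := by
          rcases htr with heq | hyc
          · exact ⟨ga, hga, haga, heq ▸ hbgb, hcga⟩
          · exact ⟨gc, hgc, hagc, hbgc, hyc⟩
        have hS : ∀ v ∈ U, v ≠ aV → v ≠ bV → v ∈ e1 ∩ e2 :=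
          fun v hv h1 h2 => ⟨hU1 ⟨hv, h1⟩, hU2 ⟨hv, h2⟩⟩
        have hcS : cV ∈ e1 ∩ e2 := hS cV hcUU hcU.1.2 hcU.2
        rcases hord e1 (hE' he1) e2 (hE' he2) hne12 ⟨cV, hcS⟩ e3 (hE' he3) with hsc | hdisj
        · refine ⟨e3, he3, fun v hv => ?_⟩
          by_cases hva : v = aV
          · exact hva ▸ ha3
          by_cases hvb : v = bV
          · exact hvb ▸ hb3
          exact hsc (hS v hv hva hvb)
        · exact absurd hdisj (Set.Nonempty.ne_empty ⟨cV, hcS, hc3⟩)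
  intro U h2 hcov
  exact key U.ncard U rfl h2 hcov

open Fin.CommRing in
lemma fagin_aux {E : Set (Set V)} (hord : Orderly E)
    {T : SimpleGraph V} (hT : T.IsTree) (hsub : ∀ e ∈ E, (T.induce e).Connected)
    {E' : Set (Set V)} (hE' : E' ⊆ E) : FaginAcyclic E' := by
  classical
  rintro ⟨t, u, hinj, hcyc⟩
  have hmem : ∀ i : Fin (t + 3), ∃ g ∈ E', g ∩ Set.range u = {u i, u (i + 1)} := by
    intro i
    have hi : ({u i, u (i + 1)} : Set V) ∈ InducedH E' (Set.range u) := by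
      rw [hcyc]; exact ⟨i, rfl⟩
    obtain ⟨-, g, hg, hgi⟩ := hi
    exact ⟨g, hg, hgi.symm⟩
  choose e heE' heU using hmem
  have humem : ∀ j : Fin (t + 3), u j ∈ e j ∧ u (j + 1) ∈ e j := by
    intro j
    constructor
    · have h : u j ∈ e j ∩ Set.range u := by
        rw [heU]; exact Set.mem_insert _ _
      exact h.1
    · have h : u (j + 1) ∈ e j ∩ Set.range u := by
        rw [heU]; exact Set.mem_insert_iff.mpr (Or.inr rfl)
      exact h.1
  have hchar : ∀ k j : Fin (t + 3), u k ∈ e j → k = j ∨ k = j + 1 := by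
    intro k j hk
    have h : u k ∈ e j ∩ Set.range u := ⟨hk, ⟨k, rfl⟩⟩
    rw [heU] at h
    simp only [Set.mem_insert_iff, Set.mem_singleton_iff] at h
    exact h.imp (fun hh => hinj hh) (fun hh => hinj hh)
  have hval : ∀ k : ℕ, k < t + 3 → (((k : ℕ) : Fin (t + 3)) : ℕ) = k := by
    intro k hk
    rw [Fin.val_natCast]
    exact Nat.mod_eq_of_lt hk
  have hadd : ∀ k : ℕ, ((k : ℕ) : Fin (t + 3)) + 1 = ((k + 1 : ℕ) : Fin (t + 3)) := by
    intro k; push_cast; ring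
  set W : Set V := {x | ∃ j : Fin (t + 3), j ≠ 0 ∧ j ≠ 1 ∧ x ∈ e j} with hWdef
  set c0 : Fin (t + 3) := ((0 : ℕ) : Fin (t + 3)) with hc0def
  set c1 : Fin (t + 3) := ((1 : ℕ) : Fin (t + 3)) with hc1def
  set c2 : Fin (t + 3) := ((2 : ℕ) : Fin (t + 3)) with hc2def
  have hv0 : (c0 : ℕ) = 0 := hval 0 (by omega)
  have hv1 : (c1 : ℕ) = 1 := hval 1 (by omega)
  have hv2 : (c2 : ℕ) = 2 := hval 2 (by omega)
  have hc01 : c0 + 1 = c1 := by rw [hc0def, hc1def, hadd 0]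
  have hc12 : c1 + 1 = c2 := by rw [hc1def, hc2def, hadd 1]
  have hne01 : ∀ j : Fin (t + 3), 2 ≤ (j : ℕ) → j ≠ 0 ∧ j ≠ 1 := by
    intro j hj
    constructor
    · intro h
      rw [h, Fin.val_zero] at hj; omega
    · intro h
      have h1 : ((1 : Fin (t + 3)) : ℕ) = 1 := by
        rw [← Nat.cast_one, hval 1 (by omega)]
      rw [h, h1] at hj; omega
  have chain : ∀ k : ℕ, k ≤ t + 1 →
      ∃ w : T.Walk (u c2) (u ((2 + k : ℕ) : Fin (t + 3))),
        ∀ x ∈ w.support, x ∈ W := by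
    intro k
    induction k with
    | zero =>
      intro _
      refine ⟨SimpleGraph.Walk.nil, ?_⟩
      intro x hx
      simp only [SimpleGraph.Walk.support_nil, List.mem_singleton] at hx
      subst hx
      obtain ⟨h0, h1⟩ := hne01 c2 (by rw [hv2])
      exact ⟨c2, h0, h1, (humem _).1⟩
    | succ k ihk =>
      intro hk
      obtain ⟨w, hw⟩ := ihk (by omega)
      have hmm : u ((2 + (k + 1) : ℕ) : Fin (t + 3)) ∈ e ((2 + k : ℕ) : Fin (t + 3)) := by
        have := (humem ((2 + k : ℕ) : Fin (t + 3))).2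
        rwa [hadd (2 + k)] at this
      obtain ⟨w2, hw2⟩ := walk_in_subtree
        (hsub (e ((2 + k : ℕ) : Fin (t + 3))) (hE' (heE' _)))
        (humem ((2 + k : ℕ) : Fin (t + 3))).1 hmm
      refine ⟨w.append w2, ?_⟩
      intro x hx
      rw [SimpleGraph.Walk.mem_support_append_iff] at hx
      rcases hx with hx | hx
      · exact hw x hx
      · obtain ⟨h0, h1⟩ := hne01 ((2 + k : ℕ) : Fin (t + 3))
          (by rw [hval (2 + k) (by omega)]; omega)
        exact ⟨((2 + k : ℕ) : Fin (t + 3)), h0, h1, hw2 x hx⟩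
  have hend : ((2 + (t + 1) : ℕ) : Fin (t + 3)) = c0 := by
    have h : (2 + (t + 1) : ℕ) = t + 3 := by omega
    rw [h, Fin.natCast_self, hc0def, Nat.cast_zero]
  obtain ⟨wlong, hwlong⟩ : ∃ w : T.Walk (u c2) (u c0),
      ∀ x ∈ w.support, x ∈ W := by
    obtain ⟨w, hw⟩ := chain (t + 1) le_rfl
    refine ⟨w.copy rfl (by rw [hend]), ?_⟩
    intro x hx
    rw [SimpleGraph.Walk.support_copy] at hx
    exact hw x hx
  have hu1e0 : u c1 ∈ e c0 := by
    have := (humem c0).2; rwa [hc01] at this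
  have hu2e1 : u c2 ∈ e c1 := by
    have := (humem c1).2; rwa [hc12] at this
  obtain ⟨p, hp, hpe⟩ := path_in_subtree (hsub (e c1) (hE' (heE' c1))) hu2e1 (humem c1).1
  obtain ⟨q, hq, hqe⟩ := path_in_subtree (hsub (e c0) (hE' (heE' c0))) hu1e0 (humem c0).1
  have hrp : wlong.toPath.1.IsPath := wlong.toPath.2
  obtain ⟨m, hmp, hmq, hmr⟩ := tree_median hT.IsAcyclic p hp q hq wlong.toPath.1 hrp
  have hme1 : m ∈ e c1 := hpe m hmp
  have hme0 : m ∈ e c0 := hqe m hmq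
  have hmW : m ∈ W := hwlong m (wlong.support_toPath_subset hmr)
  obtain ⟨j, hj0, hj1, hmej⟩ := hmW
  have hne : e c0 ≠ e c1 := by
    intro h
    have h0 : u c0 ∈ e c1 := h ▸ (humem c0).1
    rcases hchar c0 c1 h0 with hh | hh
    · have := congrArg Fin.val hh; rw [hv0, hv1] at this; omega
    · rw [hc12] at hh
      have := congrArg Fin.val hh; rw [hv0, hv2] at this; omega
  rcases hord (e c0) (hE' (heE' c0)) (e c1) (hE' (heE' c1)) hne
      ⟨u c1, hu1e0, (humem c1).1⟩ (e j) (hE' (heE' j)) with hsc | hdisj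
  · have hu1j : u c1 ∈ e j := hsc ⟨hu1e0, (humem c1).1⟩
    rcases hchar c1 j hu1j with hh | hh
    · apply hj1
      rw [← hh, hc1def, Nat.cast_one]
    · apply hj0
      have h1 : j + 1 = 0 + 1 := by
        rw [zero_add, ← hh, hc1def, Nat.cast_one]
      exact add_right_cancel h1
  · have : m ∈ (e c0 ∩ e c1) ∩ e j := ⟨⟨hme0, hme1⟩, hmej⟩
    rw [hdisj] at this
    exact this

end MainAux

/-- Every connected orderly hypertree without nested edges is γ-acyclic:
it is β-acyclic and there are no pairwise distinct vertices `x, y, z` with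
`{{x,y},{y,z},{x,y,z}} ⊆ H[{x,y,z}]`. -/
theorem stmt_4 {V : Type*} [Fintype V] (E : Set (Set V))
    (hcard : ∀ e ∈ E, 2 ≤ e.ncard) (hconn : HConnected E) (hnest : NoNestedEdges E)
    (hord : Orderly E) (htree : IsHypertree E) :
    BetaAcyclic E ∧
      ¬ ∃ x y z : V, x ≠ y ∧ x ≠ z ∧ y ≠ z ∧
        ({x, y} : Set V) ∈ InducedH E {x, y, z} ∧
        ({y, z} : Set V) ∈ InducedH E {x, y, z} ∧
        ({x, y, z} : Set V) ∈ InducedH E {x, y, z} := by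
  obtain ⟨T, hT, hsub⟩ := htree
  constructor
  · intro E' hE'
    exact ⟨fagin_aux hord hT hsub hE', conformal_aux hord hT hsub hE'⟩
  · rintro ⟨x, y, z, hxy, hxz, hyz, ⟨-, e1, he1, h1⟩, ⟨-, e2, he2, h2⟩, ⟨-, e3, he3, h3⟩⟩
    have hx1 : x ∈ e1 := by
      have : x ∈ e1 ∩ {x, y, z} := h1 ▸ Set.mem_insert _ _
      exact this.1
    have hy1 : y ∈ e1 := by
      have : y ∈ e1 ∩ {x, y, z} := h1 ▸ (by simp : y ∈ ({x, y} : Set V))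
      exact this.1
    have hy2 : y ∈ e2 := by
      have : y ∈ e2 ∩ {x, y, z} := h2 ▸ (by simp : y ∈ ({y, z} : Set V))
      exact this.1
    have hx3 : x ∈ e3 := by
      have : x ∈ e3 ∩ {x, y, z} := h3 ▸ (by simp : x ∈ ({x, y, z} : Set V))
      exact this.1
    have hy3 : y ∈ e3 := by
      have : y ∈ e3 ∩ {x, y, z} := h3 ▸ (by simp : y ∈ ({x, y, z} : Set V))
      exact this.1
    have hne : e1 ≠ e3 := by
      rintro rfl
      have hz1 : z ∈ ({x, y} : Set V) := by
        rw [h1, ← h3]; simp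
      rcases hz1 with rfl | rfl
      · exact hxz rfl
      · exact hyz rfl
    rcases hord e1 he1 e3 he3 hne ⟨x, hx1, hx3⟩ e2 he2 with hsc | hdisj
    · have hx2 : x ∈ e2 := hsc ⟨hx1, hx3⟩
      have : x ∈ ({y, z} : Set V) := by
        rw [h2]; exact ⟨hx2, by simp⟩
      rcases this with rfl | rfl
      · exact hxy rfl
      · exact hxz rfl
    · have : y ∈ (e1 ∩ e3) ∩ e2 := ⟨⟨hy1, hy3⟩, hy2⟩
      rw [hdisj] at this
      exact this
end

section
/- If a hypergraph H=(V,E) is β-acyclic, then its line graph L(H) is chordal. -/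
open Set

variable {V : Type*}

/-- The line graph of a hypergraph: vertices are the edges of the hypergraph, two
distinct edges being adjacent iff they intersect. -/
def HLineGraph (E : Set (Set V)) : SimpleGraph {e : Set V // e ∈ E} :=
  SimpleGraph.fromRel fun e f => ((e : Set V) ∩ (f : Set V)).Nonempty

/-- A graph is chordal if it has no induced cycle of length at least four: there is no
injective cyclic sequence of `n ≥ 4` vertices whose adjacencies are exactly the
consecutive ones. -/
def IsChordalGraph {W : Type*} (G : SimpleGraph W) : Prop :=
  ¬ ∃ (n : ℕ) (f : Fin (n + 4) → W), Function.Injective f ∧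
    ∀ i j : Fin (n + 4), G.Adj (f i) (f j) ↔ (j = i + 1 ∨ i = j + 1)

/-- If a hypergraph is β-acyclic, then its line graph is chordal. -/
theorem stmt_6 {V : Type*} [Fintype V] (E : Set (Set V))
    (hcard : ∀ e ∈ E, 2 ≤ e.ncard) (hbeta : BetaAcyclic E) :
    IsChordalGraph (HLineGraph E) := by
  rintro ⟨n, f, finj, hadj⟩
  set g : Fin (n + 4) → Set V := fun i => (f i : Set V) with hg
  have hgE : ∀ i, g i ∈ E := fun i => (f i).2
  -- basic Fin facts
  have h1 : (1 : Fin (n + 4)) ≠ 0 := by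
    intro h
    have := congrArg Fin.val h
    simp [Fin.val_one] at this
  have h11 : (1 + 1 : Fin (n + 4)) ≠ 0 := by
    intro h
    have := congrArg Fin.val h
    rw [Fin.val_add, Fin.val_one, Fin.val_zero, Nat.mod_eq_of_lt (by omega)] at this
    omega
  have h111 : (1 + 1 + 1 : Fin (n + 4)) ≠ 0 := by
    intro h
    have := congrArg Fin.val h
    rw [Fin.val_add, Fin.val_add, Fin.val_one, Fin.val_zero,
      Nat.mod_eq_of_lt (show 1 + 1 < n + 4 by omega), Nat.mod_eq_of_lt (by omega)] at this
    omega
  -- intersections happen exactly for consecutive edges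
  have key : ∀ i j : Fin (n + 4), i ≠ j →
      ((g i ∩ g j).Nonempty ↔ (j = i + 1 ∨ i = j + 1)) := by
    intro i j hij
    rw [← hadj i j]
    constructor
    · intro hne
      exact ⟨fun h => hij (finj h), Or.inl hne⟩
    · rintro ⟨-, h | h⟩
      · exact h
      · exact Set.inter_comm (g j) (g i) ▸ h
  have selfne : ∀ (i : Fin (n + 4)) (k : Fin (n + 4)), k ≠ 0 → i ≠ i + k := by
    intro i k hk h
    exact hk (by
      have := h.symm
      rwa [add_eq_left] at this)
  -- choose a vertex in each consecutive intersection
  have hu : ∀ i : Fin (n + 4), (g i ∩ g (i + 1)).Nonempty := fun i =>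
    (key i (i + 1) (selfne i 1 h1)).2 (Or.inl rfl)
  choose u hmem using hu
  have hu1 : ∀ i, u i ∈ g i := fun i => (hmem i).1
  have hu2 : ∀ i, u i ∈ g (i + 1) := fun i => (hmem i).2
  -- injectivity of u
  have uinj : Function.Injective u := by
    intro i j h
    by_contra hij
    have hx1 : (g i ∩ g j).Nonempty := ⟨u i, hu1 i, h ▸ hu1 j⟩
    rcases (key i j hij).1 hx1 with hc | hc
    · -- j = i + 1 : then u i = u j ∈ g i ∩ g (j+1) = g i ∩ g (i+1+1)
      subst hc
      have hne2 : i ≠ i + 1 + 1 := by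
        rw [add_assoc]; exact selfne i (1 + 1) h11
      have hx2 : (g i ∩ g (i + 1 + 1)).Nonempty := ⟨u i, hu1 i, h ▸ hu2 (i + 1)⟩
      rcases (key i (i + 1 + 1) hne2).1 hx2 with hc2 | hc2
      · exact selfne (i + 1) 1 h1 (by rw [hc2])
      · rw [add_assoc, add_assoc] at hc2
        exact selfne i (1 + (1 + 1)) (by rwa [← add_assoc]) hc2
    · -- i = j + 1 : then u j = u i ∈ g j ∩ g (i+1) = g j ∩ g (j+1+1)
      subst hc
      have hne2 : j ≠ j + 1 + 1 := by
        rw [add_assoc]; exact selfne j (1 + 1) h11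
      have hx2 : (g j ∩ g (j + 1 + 1)).Nonempty := ⟨u j, hu1 j, h ▸ hu2 (j + 1)⟩
      rcases (key j (j + 1 + 1) hne2).1 hx2 with hc2 | hc2
      · exact selfne (j + 1) 1 h1 (by rw [hc2])
      · rw [add_assoc, add_assoc] at hc2
        exact selfne j (1 + (1 + 1)) (by rwa [← add_assoc]) hc2
  -- the trace of each edge on the chosen vertices
  have claim : ∀ j : Fin (n + 4), g (j + 1) ∩ Set.range u = {u j, u (j + 1)} := by
    intro j
    ext x
    constructor
    · rintro ⟨hxg, k, rfl⟩
      by_cases hk : k = j + 1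
      · subst hk; exact Or.inr rfl
      by_cases hk' : k = j
      · subst hk'; exact Or.inl rfl
      exfalso
      have hkj : j + 1 ≠ k := fun h => hk h.symm
      have hx1 : (g (j + 1) ∩ g k).Nonempty := ⟨u k, hxg, hu1 k⟩
      rcases (key (j + 1) k hkj).1 hx1 with hc | hc
      · -- k = j + 1 + 1
        subst hc
        have hne2 : j + 1 ≠ j + 1 + 1 + 1 := by
          rw [add_assoc (j + 1)]; exact selfne (j + 1) (1 + 1) h11
        have hx2 : (g (j + 1) ∩ g (j + 1 + 1 + 1)).Nonempty :=
          ⟨u (j + 1 + 1), hxg, hu2 (j + 1 + 1)⟩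
        rcases (key (j + 1) (j + 1 + 1 + 1) hne2).1 hx2 with hc2 | hc2
        · exact selfne (j + 1 + 1) 1 h1 (by rw [hc2])
        · rw [add_assoc (j + 1 + 1), add_assoc (j + 1)] at hc2
          exact selfne (j + 1) (1 + (1 + 1)) (by rwa [← add_assoc]) hc2
      · exact hk' (add_right_cancel hc.symm)
    · rintro (rfl | rfl)
      · exact ⟨hu2 j, j, rfl⟩
      · exact ⟨hu1 (j + 1), j + 1, rfl⟩
  -- the chosen edges form a subset of E which is not Fagin-acyclic
  have hsub : Set.range g ⊆ E := by rintro e ⟨i, rfl⟩; exact hgE i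
  obtain ⟨hfag, -⟩ := hbeta (Set.range g) hsub
  apply hfag
  refine ⟨n + 1, u, uinj, ?_⟩
  ext s
  constructor
  · rintro ⟨hsne, e, ⟨j, rfl⟩, rfl⟩
    refine ⟨j - 1, ?_⟩
    have hj : j = (j - 1) + 1 := by rw [sub_add_cancel]
    conv_lhs => rw [hj, claim (j - 1)]
  · rintro ⟨i, rfl⟩
    exact ⟨⟨u i, Or.inl rfl⟩, g (i + 1), ⟨i + 1, rfl⟩, (claim i).symm⟩
end

section
/- Let H=(V,E) be a hypergraph that is β-acyclic and orderly. Then E satisfies the Helly property: every subset S ⊆ E whose edges pairwise intersect has a nonempty common intersection. -/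
open Set

variable {V : Type*}

/-- If a hypergraph is β-acyclic and orderly, then its edge set satisfies
the Helly property: every (nonempty) collection of edges that pairwise intersect has a
nonempty common intersection. -/
theorem stmt_7 {V : Type*} [Fintype V] (E : Set (Set V))
    (hcard : ∀ e ∈ E, 2 ≤ e.ncard) (hbeta : BetaAcyclic E) (hord : Orderly E) :
    ∀ S ⊆ E, S.Nonempty → (∀ e ∈ S, ∀ e' ∈ S, (e ∩ e').Nonempty) →
      (⋂₀ S).Nonempty := by
  intro S hSE hSne hpair
  obtain ⟨e₀, he₀⟩ := hSne
  by_cases hall : ∀ e ∈ S, e = e₀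
  · obtain ⟨z, hz⟩ := hpair e₀ he₀ e₀ he₀
    exact ⟨z, fun e he => (hall e he) ▸ hz.1⟩
  push_neg at hall
  obtain ⟨e₂, he₂, hne⟩ := hall
  have hI : (e₀ ∩ e₂).Nonempty := hpair e₀ he₀ e₂ he₂
  by_cases hsub : ∀ e ∈ S, e₀ ∩ e₂ ⊆ e
  · obtain ⟨z, hz⟩ := hI
    exact ⟨z, fun e he => hsub e he hz⟩
  exfalso
  push_neg at hsub
  obtain ⟨e₃, he₃, hnsub⟩ := hsub
  have hdisj : (e₀ ∩ e₂) ∩ e₃ = ∅ := by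
    rcases hord e₀ (hSE he₀) e₂ (hSE he₂) (Ne.symm hne) hI e₃ (hSE he₃) with h | h
    · exact absurd h hnsub
    · exact h
  obtain ⟨x, hx0, hx3⟩ := hpair e₀ he₀ e₃ he₃
  obtain ⟨y, hy2, hy3⟩ := hpair e₂ he₂ e₃ he₃
  obtain ⟨z, hz0, hz2⟩ := hI
  have hz3 : z ∉ e₃ := fun h =>
    Set.eq_empty_iff_forall_notMem.1 hdisj z ⟨⟨hz0, hz2⟩, h⟩
  have hxz : x ≠ z := fun h => hz3 (h ▸ hx3)
  have hyz : y ≠ z := fun h => hz3 (h ▸ hy3)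
  have hxy : x ≠ y := fun h =>
    Set.eq_empty_iff_forall_notMem.1 hdisj x ⟨⟨hx0, h ▸ hy2⟩, hx3⟩
  set E' : Set (Set V) := {e₀, e₂, e₃} with hE'def
  have hE'sub : E' ⊆ E := by
    intro e he
    rcases he with rfl | rfl | rfl
    · exact hSE he₀
    · exact hSE he₂
    · exact hSE he₃
  have hconf : HyperConformal E' := (hbeta E' hE'sub).2
  set U : Set V := {x, y, z} with hUdef
  have h2 : 2 ≤ U.ncard := by
    have hsub2 : ({x, z} : Set V) ⊆ U := by
      intro a ha
      rcases ha with rfl | rfl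
      · exact Or.inl rfl
      · exact Or.inr (Or.inr rfl)
    calc 2 = ({x, z} : Set V).ncard := (Set.ncard_pair hxz).symm
      _ ≤ U.ncard := Set.ncard_le_ncard hsub2 (Set.toFinite U)
  have hcov : ∀ a ∈ U, ∀ b ∈ U, ∃ e ∈ E', a ∈ e ∧ b ∈ e := by
    intro a ha b hb
    rcases ha with rfl | rfl | rfl <;> rcases hb with rfl | rfl | rfl
    · exact ⟨e₃, Or.inr (Or.inr rfl), hx3, hx3⟩
    · exact ⟨e₃, Or.inr (Or.inr rfl), hx3, hy3⟩
    · exact ⟨e₀, Or.inl rfl, hx0, hz0⟩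
    · exact ⟨e₃, Or.inr (Or.inr rfl), hy3, hx3⟩
    · exact ⟨e₃, Or.inr (Or.inr rfl), hy3, hy3⟩
    · exact ⟨e₂, Or.inr (Or.inl rfl), hy2, hz2⟩
    · exact ⟨e₀, Or.inl rfl, hz0, hx0⟩
    · exact ⟨e₂, Or.inr (Or.inl rfl), hz2, hy2⟩
    · exact ⟨e₀, Or.inl rfl, hz0, hz0⟩
  obtain ⟨e, heE', hUe⟩ := hconf U h2 hcov
  have hxU : x ∈ U := Or.inl rfl
  have hyU : y ∈ U := Or.inr (Or.inl rfl)
  have hzU : z ∈ U := Or.inr (Or.inr rfl)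
  rcases heE' with rfl | rfl | rfl
  · exact Set.eq_empty_iff_forall_notMem.1 hdisj y ⟨⟨hUe hyU, hy2⟩, hy3⟩
  · exact Set.eq_empty_iff_forall_notMem.1 hdisj x ⟨⟨hx0, hUe hxU⟩, hx3⟩
  · exact hz3 (hUe hzU)
end

section
/- Let H=(V,E) be a hypergraph without nested edges that is β-acyclic and contains no pairwise distinct vertices x, y, z ∈ V with {{x,y},{y},{x,y,z}} ⊆ H[{x,y,z}]. Then H is orderly: for any two distinct edges e₁,e₂ ∈ E with e₁ ∩ e₂ ≠ ∅ and any edge e ∈ E, either e₁ ∩ e₂ ⊆ e or (e₁ ∩ e₂) ∩ e = ∅. -/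
open Set

variable {V : Type*}

/-- A hypergraph without nested edges that is β-acyclic and contains no
pairwise distinct vertices `x, y, z` with `{{x,y},{y},{x,y,z}} ⊆ H[{x,y,z}]` is orderly. -/
theorem stmt_8 {V : Type*} [Fintype V] (E : Set (Set V))
    (hcard : ∀ e ∈ E, 2 ≤ e.ncard) (hnest : NoNestedEdges E)
    (hbeta : BetaAcyclic E)
    (hno : ¬ ∃ x y z : V, x ≠ y ∧ x ≠ z ∧ y ≠ z ∧
      ({x, y} : Set V) ∈ InducedH E {x, y, z} ∧
      ({y} : Set V) ∈ InducedH E {x, y, z} ∧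
      ({x, y, z} : Set V) ∈ InducedH E {x, y, z}) :
    Orderly E := by
  intro e₁ he₁ e₂ he₂ hne hS f hf
  by_contra hcon
  push_neg at hcon
  obtain ⟨hns, hni⟩ := hcon
  rw [Set.not_subset] at hns
  obtain ⟨y, hyS, hyf⟩ := hns
  obtain ⟨x, hxS⟩ := hni
  obtain ⟨⟨hx1, hx2⟩, hxf⟩ := hxS
  obtain ⟨hy1, hy2⟩ := hyS
  have hxy : x ≠ y := fun h => hyf (h ▸ hxf)
  by_cases hA : ∃ a ∈ e₁, a ∉ e₂ ∧ a ∉ f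
  · obtain ⟨a, ha1, ha2, haf⟩ := hA
    refine hno ⟨y, x, a, hxy.symm, fun h => ha2 (h ▸ hy2), fun h => haf (h ▸ hxf),
      ⟨⟨y, by simp⟩, e₂, he₂, ?_⟩, ⟨⟨x, rfl⟩, f, hf, ?_⟩,
      ⟨⟨y, by simp⟩, e₁, he₁, ?_⟩⟩
    · ext u
      simp only [Set.mem_insert_iff, Set.mem_singleton_iff, Set.mem_inter_iff]
      constructor
      · rintro (rfl | rfl)
        exacts [⟨hy2, Or.inl rfl⟩, ⟨hx2, Or.inr (Or.inl rfl)⟩]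
      · rintro ⟨hue, (rfl | rfl | rfl)⟩
        exacts [Or.inl rfl, Or.inr rfl, absurd hue ha2]
    · ext u
      simp only [Set.mem_insert_iff, Set.mem_singleton_iff, Set.mem_inter_iff]
      constructor
      · rintro rfl
        exact ⟨hxf, Or.inr (Or.inl rfl)⟩
      · rintro ⟨hue, (rfl | rfl | rfl)⟩
        exacts [absurd hue hyf, rfl, absurd hue haf]
    · refine (Set.inter_eq_right.mpr ?_).symm
      rintro u (rfl | rfl | rfl)
      exacts [hy1, hx1, ha1]
  · by_cases hB : ∃ a ∈ e₂, a ∉ e₁ ∧ a ∉ f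
    · obtain ⟨a, ha2, ha1, haf⟩ := hB
      refine hno ⟨y, x, a, hxy.symm, fun h => ha1 (h ▸ hy1), fun h => haf (h ▸ hxf),
        ⟨⟨y, by simp⟩, e₁, he₁, ?_⟩, ⟨⟨x, rfl⟩, f, hf, ?_⟩,
        ⟨⟨y, by simp⟩, e₂, he₂, ?_⟩⟩
      · ext u
        simp only [Set.mem_insert_iff, Set.mem_singleton_iff, Set.mem_inter_iff]
        constructor
        · rintro (rfl | rfl)
          exacts [⟨hy1, Or.inl rfl⟩, ⟨hx1, Or.inr (Or.inl rfl)⟩]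
        · rintro ⟨hue, (rfl | rfl | rfl)⟩
          exacts [Or.inl rfl, Or.inr rfl, absurd hue ha1]
      · ext u
        simp only [Set.mem_insert_iff, Set.mem_singleton_iff, Set.mem_inter_iff]
        constructor
        · rintro rfl
          exact ⟨hxf, Or.inr (Or.inl rfl)⟩
        · rintro ⟨hue, (rfl | rfl | rfl)⟩
          exacts [absurd hue hyf, rfl, absurd hue haf]
      · refine (Set.inter_eq_right.mpr ?_).symm
        rintro u (rfl | rfl | rfl)
        exacts [hy2, hx2, ha2]
    · push_neg at hA hB
      obtain ⟨p, hp1, hp2⟩ : ∃ p ∈ e₁, p ∉ e₂ := by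
        by_contra h
        push_neg at h
        exact hne (hnest e₁ he₁ e₂ he₂ h)
      obtain ⟨q, hq2, hq1⟩ : ∃ q ∈ e₂, q ∉ e₁ := by
        by_contra h
        push_neg at h
        exact hne (hnest e₂ he₂ e₁ he₁ h).symm
      have hpf : p ∈ f := hA p hp1 hp2
      have hqf : q ∈ f := hB q hq2 hq1
      have hyp : y ≠ p := fun h => hp2 (h ▸ hy2)
      have hyq : y ≠ q := fun h => hq1 (h ▸ hy1)
      have hpq : p ≠ q := fun h => hp2 (h ▸ hq2)
      have hE' : ({e₁, e₂, f} : Set (Set V)) ⊆ E := by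
        rintro s (rfl | rfl | rfl) <;> assumption
      have hconf : HyperConformal ({e₁, e₂, f} : Set (Set V)) := (hbeta _ hE').2
      have hcard2 : 2 ≤ ({y, p, q} : Set V).ncard := by
        have h2 : ({y, p} : Set V).ncard = 2 := Set.ncard_pair hyp
        have hsub : ({y, p} : Set V) ⊆ {y, p, q} := by
          rintro u (rfl | rfl)
          exacts [Or.inl rfl, Or.inr (Or.inl rfl)]
        exact h2 ▸ Set.ncard_le_ncard hsub (Set.toFinite _)
      obtain ⟨g, hg, hUg⟩ := hconf {y, p, q} hcard2 (by
        rintro u (rfl | rfl | rfl) v (rfl | rfl | rfl)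
        · exact ⟨e₁, Or.inl rfl, hy1, hy1⟩
        · exact ⟨e₁, Or.inl rfl, hy1, hp1⟩
        · exact ⟨e₂, Or.inr (Or.inl rfl), hy2, hq2⟩
        · exact ⟨e₁, Or.inl rfl, hp1, hy1⟩
        · exact ⟨e₁, Or.inl rfl, hp1, hp1⟩
        · exact ⟨f, Or.inr (Or.inr rfl), hpf, hqf⟩
        · exact ⟨e₂, Or.inr (Or.inl rfl), hq2, hy2⟩
        · exact ⟨f, Or.inr (Or.inr rfl), hqf, hpf⟩
        · exact ⟨e₂, Or.inr (Or.inl rfl), hq2, hq2⟩)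
      rcases hg with rfl | rfl | rfl
      · exact hq1 (hUg (Or.inr (Or.inr rfl)))
      · exact hp2 (hUg (Or.inr (Or.inl rfl)))
      · exact hyf (hUg (Or.inl rfl))
end

section
/- Let H=(V,E) and H'=(V,E') be orderly hypergraphs on the same vertex set, and suppose there is a bijection φ : E → E' such that P_H(e) = P_{H'}(φ(e)) for every e ∈ E and e₁ ∩ e₂ = φ(e₁) ∩ φ(e₂) for all e₁, e₂ ∈ E (i.e., H and H' have the same skeleton graph). Then φ(e) = e for every e ∈ E, and hence E = E'. -/
open Set

variable {V : Type*}

/-- If two orderly hypergraphs on the same vertex set admit a bijection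
`φ` between their edge sets preserving private-vertex sets and the intersections of
(distinct) pairs of edges (i.e., they have the same skeleton graph), then `φ` is the
identity and the hypergraphs are equal. -/
theorem stmt_9 {V : Type*} [Fintype V] (E E' : Set (Set V))
    (hcard : ∀ e ∈ E, 2 ≤ e.ncard) (hcard' : ∀ e ∈ E', 2 ≤ e.ncard)
    (hord : Orderly E) (hord' : Orderly E')
    (φ : {e : Set V // e ∈ E} → {e : Set V // e ∈ E'})
    (hbij : Function.Bijective φ)
    (hpriv : ∀ e : {e : Set V // e ∈ E}, PrivateVerts E e.val = PrivateVerts E' (φ e).val)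
    (hint : ∀ e₁ e₂ : {e : Set V // e ∈ E}, e₁ ≠ e₂ →
      e₁.val ∩ e₂.val = (φ e₁).val ∩ (φ e₂).val) :
    (∀ e : {e : Set V // e ∈ E}, (φ e).val = e.val) ∧ E = E' := by
  have key : ∀ e : {e : Set V // e ∈ E}, (φ e).val = e.val := by
    intro e
    ext v
    constructor
    · intro hv
      by_cases hp : v ∈ PrivateVerts E' (φ e).val
      · rw [← hpriv e] at hp
        exact hp.1
      · simp only [PrivateVerts, Set.mem_setOf_eq, not_and, not_forall] at hp
        obtain ⟨f, hfE', hfne, hvf⟩ := hp hv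
        obtain ⟨e₂, he₂⟩ := hbij.2 ⟨f, hfE'⟩
        have hne : e ≠ e₂ := by
          intro h; apply hfne; rw [h, he₂]
        have := hint e e₂ hne
        rw [he₂] at this
        have hv2 : v ∈ (φ e).val ∩ f := ⟨hv, not_not.mp hvf⟩
        rw [← this] at hv2
        exact hv2.1
    · intro hv
      by_cases hp : v ∈ PrivateVerts E e.val
      · rw [hpriv e] at hp
        exact hp.1
      · simp only [PrivateVerts, Set.mem_setOf_eq, not_and, not_forall] at hp
        obtain ⟨f, hfE, hfne, hvf⟩ := hp hv
        have hne : e ≠ (⟨f, hfE⟩ : {e : Set V // e ∈ E}) := by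
          intro h; apply hfne; rw [h]
        have := hint e ⟨f, hfE⟩ hne
        have hv2 : v ∈ e.val ∩ f := ⟨hv, not_not.mp hvf⟩
        rw [this] at hv2
        exact hv2.1
  refine ⟨key, ?_⟩
  ext x
  constructor
  · intro hx
    have h : (φ ⟨x, hx⟩).val = x := key ⟨x, hx⟩
    exact h ▸ (φ ⟨x, hx⟩).2
  · intro hx
    obtain ⟨e, he⟩ := hbij.2 ⟨x, hx⟩
    have h : x = e.val := by
      have := key e; rw [he] at this; exact this ▸ rfl
    exact h ▸ e.2
end

section
/- Let H=(V,E) be a connected hypergraph without nested edges in which every vertex belongs to at least one edge. Then H is an orderly hypertree if and only if H is a hypertree and the nonempty sets P_H(e), for e ∈ E, together with the sets in ∩²_E, form a partition of V (pairwise disjoint, with union V). -/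
open Set

variable {V : Type*}

/-- A connected hypergraph without nested edges in which every vertex
lies in some edge is an orderly hypertree iff it is a hypertree and the nonempty sets
`P_H(e)` together with the sets in `∩²_E` form a partition of `V`. -/
theorem stmt_10 {V : Type*} [Fintype V] (E : Set (Set V))
    (hcard : ∀ e ∈ E, 2 ≤ e.ncard) (hconn : HConnected E) (hnest : NoNestedEdges E)
    (hcover : ∀ v : V, ∃ e ∈ E, v ∈ e) :
    (Orderly E ∧ IsHypertree E) ↔
      (IsHypertree E ∧
        (∀ S ∈ SkelParts E, ∀ S' ∈ SkelParts E, S ≠ S' → S ∩ S' = ∅) ∧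
        ⋃₀ SkelParts E = Set.univ) := by
  constructor
  · rintro ⟨hord, hT⟩
    refine ⟨hT, ?_, ?_⟩
    · intro S hS S' hS' hne
      ext x
      simp only [Set.mem_inter_iff, Set.mem_empty_iff_false, iff_false]
      rintro ⟨hxS, hxS'⟩
      rcases hS with ⟨-, e, he, rfl⟩ | ⟨-, e₁, he₁, e₂, he₂, h12, rfl⟩ <;>
        rcases hS' with ⟨-, f, hf, rfl⟩ | ⟨-, f₁, hf₁, f₂, hf₂, g12, rfl⟩
      · rcases eq_or_ne e f with rfl | hef
        · exact hne rfl
        · exact hxS.2 f hf hef.symm hxS'.1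
      · rcases eq_or_ne f₁ e with rfl | h1e
        · exact hxS.2 f₂ hf₂ g12.symm hxS'.2
        · exact hxS.2 f₁ hf₁ h1e hxS'.1
      · rcases eq_or_ne e₁ f with rfl | h1e
        · exact hxS'.2 e₂ he₂ h12.symm hxS.2
        · exact hxS'.2 e₁ he₁ h1e hxS.1
      · apply hne
        apply Set.Subset.antisymm
        · rcases hord e₁ he₁ e₂ he₂ h12 ⟨x, hxS⟩ f₁ hf₁ with h | h
          · rcases hord e₁ he₁ e₂ he₂ h12 ⟨x, hxS⟩ f₂ hf₂ with h' | h'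
            · exact fun y hy => ⟨h hy, h' hy⟩
            · exact absurd (Set.eq_empty_iff_forall_notMem.mp h' x ⟨hxS, hxS'.2⟩) (fun c => c)
          · exact absurd (Set.eq_empty_iff_forall_notMem.mp h x ⟨hxS, hxS'.1⟩) (fun c => c)
        · rcases hord f₁ hf₁ f₂ hf₂ g12 ⟨x, hxS'⟩ e₁ he₁ with h | h
          · rcases hord f₁ hf₁ f₂ hf₂ g12 ⟨x, hxS'⟩ e₂ he₂ with h' | h'
            · exact fun y hy => ⟨h hy, h' hy⟩
            · exact absurd (Set.eq_empty_iff_forall_notMem.mp h' x ⟨hxS', hxS.2⟩) (fun c => c)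
          · exact absurd (Set.eq_empty_iff_forall_notMem.mp h x ⟨hxS', hxS.1⟩) (fun c => c)
    · apply Set.eq_univ_of_forall
      intro v
      obtain ⟨e, he, hv⟩ := hcover v
      by_cases hp : ∀ e' ∈ E, e' ≠ e → v ∉ e'
      · exact ⟨PrivateVerts E e, Or.inl ⟨⟨v, hv, hp⟩, e, he, rfl⟩, hv, hp⟩
      · push_neg at hp
        obtain ⟨e', he', hne, hv'⟩ := hp
        exact ⟨e ∩ e', Or.inr ⟨⟨v, hv, hv'⟩, e, he, e', he', hne.symm, rfl⟩, hv, hv'⟩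
  · rintro ⟨hT, hdisj, -⟩
    refine ⟨?_, hT⟩
    intro e₁ he₁ e₂ he₂ hne hS e he
    rcases Set.eq_empty_or_nonempty ((e₁ ∩ e₂) ∩ e) with h | ⟨x, hx⟩
    · exact Or.inr h
    left
    rcases eq_or_ne e e₁ with rfl | h1
    · exact Set.inter_subset_left
    rcases eq_or_ne e e₂ with rfl | h2
    · exact Set.inter_subset_right
    have hmem1 : (e₁ ∩ e₂) ∈ SkelParts E := Or.inr ⟨hS, e₁, he₁, e₂, he₂, hne, rfl⟩
    have hmem2 : (e₁ ∩ e) ∈ SkelParts E :=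
      Or.inr ⟨⟨x, hx.1.1, hx.2⟩, e₁, he₁, e, he, (Ne.symm h1), rfl⟩
    rcases eq_or_ne (e₁ ∩ e₂) (e₁ ∩ e) with heq | hne'
    · exact heq ▸ Set.inter_subset_right
    · have := hdisj _ hmem1 _ hmem2 hne'
      exact absurd (Set.eq_empty_iff_forall_notMem.mp this x ⟨hx.1, hx.1.1, hx.2⟩) (fun c => c)
end

section
/- Let H=(V,E) be a connected hypergraph without nested edges in which every vertex belongs to at least one edge. Then H is an orderly hypertree if and only if its skeleton graph S(H) is a tree (a connected acyclic graph). -/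
open Set

variable {V : Type*}

/-- The nodes of the skeleton graph of a hypergraph: black nodes (left) are the edges;
colored nodes (right) are the nonempty private-vertex sets `P_H(e)` (blue) together with
the nonempty intersections of pairs of distinct edges (red). -/
def SkelNode (E : Set (Set V)) : Type _ :=
  {e : Set V // e ∈ E} ⊕
    {S : Set V // (S.Nonempty ∧ ∃ e ∈ E, S = PrivateVerts E e) ∨ S ∈ PairInts E}

/-- Auxiliary (one-sided) adjacency relation of the skeleton graph: a black node `e` is
joined to a colored node `S` iff `S` is the private-vertex set of `e`, or `S` is the
intersection of `e` with some other edge. -/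
def SkelAdjAux (E : Set (Set V)) : SkelNode E → SkelNode E → Prop
  | Sum.inl e, Sum.inr S =>
      S.val = PrivateVerts E e.val ∨ ∃ e' ∈ E, e' ≠ e.val ∧ S.val = e.val ∩ e'
  | _, _ => False

/-- The skeleton graph of a hypergraph. -/
def SkeletonGraph (E : Set (Set V)) : SimpleGraph (SkelNode E) :=
  SimpleGraph.fromRel (SkelAdjAux E)

/-! ### Basic lemmas about orderly hypergraphs -/

section Basic

variable {E : Set (Set V)}

lemma mem_pairInts {e f : Set V} (he : e ∈ E) (hf : f ∈ E) (hef : e ≠ f)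
    (h : (e ∩ f).Nonempty) : e ∩ f ∈ PairInts E :=
  ⟨h, e, he, f, hf, hef, rfl⟩

lemma pairInts_nonempty {S : Set V} (hS : S ∈ PairInts E) : S.Nonempty := hS.1

lemma pairInts_subset_of_inter (hord : Orderly E) {S e : Set V} (hS : S ∈ PairInts E)
    (he : e ∈ E) (h : (S ∩ e).Nonempty) : S ⊆ e := by
  obtain ⟨hne, e₁, he₁, e₂, he₂, h12, rfl⟩ := hS
  rcases hord e₁ he₁ e₂ he₂ h12 hne e he with h' | h'
  · exact h'
  · exact absurd h' (by simp only [← Set.not_nonempty_iff_eq_empty, not_not]; exact h)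

lemma pairInts_eq_of_inter (hord : Orderly E) {S S' : Set V} (hS : S ∈ PairInts E)
    (hS' : S' ∈ PairInts E) (h : (S ∩ S').Nonempty) : S = S' := by
  obtain ⟨hne', e₁, he₁, e₂, he₂, h12, rfl⟩ := hS'
  have h1 : S ⊆ e₁ := pairInts_subset_of_inter hord hS he₁
    (h.mono (Set.inter_subset_inter_right _ Set.inter_subset_left))
  have h2 : S ⊆ e₂ := pairInts_subset_of_inter hord hS he₂
    (h.mono (Set.inter_subset_inter_right _ Set.inter_subset_right))
  have hsub : S ⊆ e₁ ∩ e₂ := Set.subset_inter h1 h2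
  -- reverse inclusion
  have h' : ((e₁ ∩ e₂) ∩ S).Nonempty := by
    obtain ⟨x, hx⟩ := pairInts_nonempty hS
    exact ⟨x, hsub hx, hx⟩
  obtain ⟨hne, f₁, hf₁, f₂, hf₂, h12', rfl⟩ := hS
  have g1 : e₁ ∩ e₂ ⊆ f₁ := pairInts_subset_of_inter hord (mem_pairInts he₁ he₂ h12 hne')
    hf₁ (h'.mono (Set.inter_subset_inter_right _ Set.inter_subset_left))
  have g2 : e₁ ∩ e₂ ⊆ f₂ := pairInts_subset_of_inter hord (mem_pairInts he₁ he₂ h12 hne')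
    hf₂ (h'.mono (Set.inter_subset_inter_right _ Set.inter_subset_right))
  exact le_antisymm hsub (Set.subset_inter g1 g2)

/-- If a red set is contained in two distinct edges, it is their full intersection. -/
lemma pairInts_eq_inter (hord : Orderly E) {S e f : Set V} (hS : S ∈ PairInts E)
    (he : e ∈ E) (hf : f ∈ E) (hef : e ≠ f) (h1 : S ⊆ e) (h2 : S ⊆ f) : S = e ∩ f := by
  have : (S ∩ (e ∩ f)).Nonempty := by
    obtain ⟨x, hx⟩ := pairInts_nonempty hS
    exact ⟨x, hx, h1 hx, h2 hx⟩
  exact pairInts_eq_of_inter hord hS (mem_pairInts he hf hef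
    (this.mono Set.inter_subset_right)) this

lemma privateVerts_subset {e : Set V} : PrivateVerts E e ⊆ e := fun _ hv => hv.1

lemma eq_of_mem_privateVerts {e f : Set V} {v : V} (hv : v ∈ PrivateVerts E e)
    (hf : f ∈ E) (hvf : v ∈ f) : f = e := by
  by_contra hne
  exact hv.2 f hf hne hvf

/-- Colored sets: the potential colored nodes of the skeleton. -/
def ColoredSet (E : Set (Set V)) (S : Set V) : Prop :=
  (S.Nonempty ∧ ∃ e ∈ E, S = PrivateVerts E e) ∨ S ∈ PairInts E

lemma ColoredSet.nonempty {S : Set V} (hS : ColoredSet E S) : S.Nonempty := by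
  rcases hS with ⟨h, _⟩ | h
  · exact h
  · exact pairInts_nonempty h

/-- Two colored sets sharing a vertex are equal (assuming orderliness). -/
lemma coloredSet_eq_of_mem (hord : Orderly E) {C C' : Set V} (hC : ColoredSet E C)
    (hC' : ColoredSet E C') {v : V} (hv : v ∈ C) (hv' : v ∈ C') : C = C' := by
  rcases hC with ⟨_, e, he, rfl⟩ | hC <;> rcases hC' with ⟨_, f, hf, rfl⟩ | hC'
  · -- blue blue
    have : f = e := eq_of_mem_privateVerts hv hf (privateVerts_subset hv')
    rw [this]
  · -- blue red
    obtain ⟨_, e₁, he₁, e₂, he₂, h12, rfl⟩ := hC'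
    have h1 : e₁ = e := eq_of_mem_privateVerts hv he₁ hv'.1
    have h2 : e₂ = e := eq_of_mem_privateVerts hv he₂ hv'.2
    exact absurd (h1.trans h2.symm) h12
  · -- red blue
    obtain ⟨_, e₁, he₁, e₂, he₂, h12, rfl⟩ := hC
    have h1 : e₁ = f := eq_of_mem_privateVerts hv' he₁ hv.1
    have h2 : e₂ = f := eq_of_mem_privateVerts hv' he₂ hv.2
    exact absurd (h1.trans h2.symm) h12
  · exact pairInts_eq_of_inter hord hC hC' ⟨v, hv, hv'⟩

/-- A colored set having a vertex in an edge is contained in that edge. -/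
lemma coloredSet_subset (hord : Orderly E) {C : Set V} (hC : ColoredSet E C) {e : Set V}
    (he : e ∈ E) {v : V} (hvC : v ∈ C) (hve : v ∈ e) : C ⊆ e := by
  rcases hC with ⟨_, f, hf, rfl⟩ | hC
  · have : e = f := eq_of_mem_privateVerts hvC he hve
    subst this
    exact privateVerts_subset
  · exact pairInts_subset_of_inter hord hC he ⟨v, hvC, hve⟩

/-- Every vertex lies in some colored set. -/
lemma exists_coloredSet_mem (hcover : ∀ v : V, ∃ e ∈ E, v ∈ e) (v : V) :
    ∃ C, ColoredSet E C ∧ v ∈ C := by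
  by_cases h : ∃ e ∈ E, ∃ f ∈ E, e ≠ f ∧ v ∈ e ∧ v ∈ f
  · obtain ⟨e, he, f, hf, hef, hve, hvf⟩ := h
    exact ⟨e ∩ f, Or.inr (mem_pairInts he hf hef ⟨v, hve, hvf⟩), hve, hvf⟩
  · push_neg at h
    obtain ⟨e, he, hve⟩ := hcover v
    have hpv : v ∈ PrivateVerts E e := by
      refine ⟨hve, fun e' he' hne hve' => ?_⟩
      exact h e' he' e he hne hve' hve
    exact ⟨PrivateVerts E e, Or.inl ⟨⟨v, hpv⟩, e, he, rfl⟩, hpv⟩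

end Basic

set_option linter.unusedSectionVars false
/-! ### Generic machinery for trees: unique paths, depth, parent -/

section TreeAux

open SimpleGraph Walk

variable {α : Type*} [DecidableEq α] {G : SimpleGraph α}

/-- The unique path between two vertices of a tree. -/
noncomputable def tPath (hG : G.IsTree) (x y : α) : G.Walk x y :=
  Classical.choose (hG.existsUnique_path x y)

lemma tPath_isPath (hG : G.IsTree) (x y : α) : (tPath hG x y).IsPath :=
  (Classical.choose_spec (hG.existsUnique_path x y)).1

lemma tPath_eq (hG : G.IsTree) {x y : α} (p : G.Walk x y) (hp : p.IsPath) :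
    p = tPath hG x y :=
  (Classical.choose_spec (hG.existsUnique_path x y)).2 p hp

/-- Depth of a vertex with respect to a root `r`. -/
noncomputable def tDepth (hG : G.IsTree) (r x : α) : ℕ := (tPath hG x r).length

/-- Parent of a vertex with respect to a root `r`. -/
noncomputable def tPar (hG : G.IsTree) (r x : α) : α := (tPath hG x r).getVert 1

variable (hG : G.IsTree) (r : α)

lemma tPath_not_nil {x : α} (hx : x ≠ r) : ¬(tPath hG x r).Nil := Walk.not_nil_of_ne hx

lemma tPar_adj {x : α} (hx : x ≠ r) : G.Adj x (tPar hG r x) :=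
  Walk.adj_snd (tPath_not_nil hG r hx)

lemma tPath_nil_root : (Walk.nil : G.Walk r r) = tPath hG r r :=
  tPath_eq hG _ (by simp)

lemma tDepth_root : tDepth hG r r = 0 := by
  unfold tDepth; rw [← tPath_nil_root]; rfl

lemma tDepth_par {x : α} (hx : x ≠ r) :
    tDepth hG r x = tDepth hG r (tPar hG r x) + 1 := by
  have h1 : (tPath hG x r).tail = tPath hG (tPar hG r x) r :=
    tPath_eq hG _ ((tPath_isPath hG x r).tail)
  have h2 := Walk.length_tail_add_one (tPath_not_nil hG r hx)
  unfold tDepth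
  rw [← h2, h1]
  rfl

lemma tPar_eq_of_adj_mem {x m : α} (hadj : G.Adj x m)
    (hm : m ∈ (tPath hG x r).support) : tPar hG r x = m := by
  have hsplit := (tPath hG x r).take_spec hm
  have htake : (tPath hG x r).takeUntil m hm = Walk.cons hadj Walk.nil := by
    have h1 : ((tPath hG x r).takeUntil m hm).IsPath := (tPath_isPath hG x r).takeUntil hm
    have h2 : (Walk.cons hadj Walk.nil).IsPath := by simp [hadj.ne]
    calc (tPath hG x r).takeUntil m hm = tPath hG x m := tPath_eq hG _ h1
      _ = Walk.cons hadj Walk.nil := (tPath_eq hG _ h2).symm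
  have hp : tPath hG x r = Walk.cons hadj ((tPath hG x r).dropUntil m hm) := by
    conv_lhs => rw [← hsplit, htake]
    rfl
  show (tPath hG x r).getVert 1 = m
  rw [hp]
  simp [Walk.getVert_cons_succ]

lemma tPar_dichotomy {x y : α} (hadj : G.Adj x y) :
    (x ≠ r ∧ tPar hG r x = y) ∨ (y ≠ r ∧ tPar hG r y = x) := by
  by_cases hy : y ∈ (tPath hG x r).support
  · left
    refine ⟨?_, tPar_eq_of_adj_mem hG r hadj hy⟩
    rintro rfl
    rw [← tPath_nil_root] at hy
    simp only [Walk.support_nil, List.mem_singleton] at hy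
    exact hadj.ne hy.symm
  · right
    have hcons : (Walk.cons hadj.symm (tPath hG x r)).IsPath := (tPath_isPath hG x r).cons hy
    have heq := tPath_eq hG _ hcons
    constructor
    · rintro rfl
      exact hy (Walk.end_mem_support _)
    · show (tPath hG y r).getVert 1 = x
      rw [← heq]
      simp [Walk.getVert_cons_succ]

lemma tDepth_lt_of_mem_support {x t : α} (ht : t ∈ (tPath hG x r).support) (hne : t ≠ x) :
    tDepth hG r t < tDepth hG r x := by
  have hsplit := (tPath hG x r).take_spec ht
  have hdrop : (tPath hG x r).dropUntil t ht = tPath hG t r :=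
    tPath_eq hG _ ((tPath_isPath hG x r).dropUntil ht)
  have hlen : ((tPath hG x r).takeUntil t ht).length
      + ((tPath hG x r).dropUntil t ht).length = (tPath hG x r).length := by
    rw [← Walk.length_append, hsplit]
  have hpos : 0 < ((tPath hG x r).takeUntil t ht).length := by
    rcases Nat.eq_zero_or_pos ((tPath hG x r).takeUntil t ht).length with h0 | h
    · exfalso
      exact (Walk.not_nil_of_ne (Ne.symm hne)) (Walk.nil_iff_length_eq.2 h0)
    · exact h
  have : tDepth hG r x = ((tPath hG x r).takeUntil t ht).length + tDepth hG r t := by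
    unfold tDepth
    rw [← hdrop, hlen]
  omega

lemma tPath_support_subset_union (x y : α) :
    ∀ a ∈ (tPath hG x y).support,
      a ∈ (tPath hG x r).support ∨ a ∈ (tPath hG y r).support := by
  intro a ha
  set w : G.Walk x y := (tPath hG x r).append (tPath hG y r).reverse with hw
  have heq : (w.toPath : G.Walk x y) = tPath hG x y := tPath_eq hG _ w.toPath.2
  have h1 : a ∈ w.support := Walk.support_toPath_subset w (heq ▸ ha)
  rw [hw, Walk.mem_support_append_iff] at h1
  rcases h1 with h1 | h1
  · exact Or.inl h1
  · right
    rwa [Walk.support_reverse, List.mem_reverse] at h1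

lemma tPath_support_subset_of_induce {s : Set α} (hc : (G.induce s).Connected)
    {x y : α} (hx : x ∈ s) (hy : y ∈ s) : ∀ a ∈ (tPath hG x y).support, a ∈ s := by
  obtain ⟨w'⟩ := hc ⟨x, hx⟩ ⟨y, hy⟩
  let f : G.induce s →g G := ⟨Subtype.val, fun {a b} h => h⟩
  have hsup : ∀ a ∈ (w'.map f).support, a ∈ s := by
    rw [Walk.support_map]
    rintro a ha
    rw [List.mem_map] at ha
    obtain ⟨b, _, rfl⟩ := ha
    exact b.2
  intro a ha
  have heq : ((w'.map f).toPath : G.Walk x y) = tPath hG x y :=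
    tPath_eq hG _ (w'.map f).toPath.2
  exact hsup a (Walk.support_toPath_subset _ (heq ▸ ha))

lemma getVert_one_mem_support {x y : α} (p : G.Walk x y) (hp : ¬p.Nil) :
    p.getVert 1 ∈ p.support := by
  rw [Walk.mem_support_iff_exists_getVert]
  refine ⟨1, rfl, ?_⟩
  rw [Walk.not_nil_iff_lt_length] at hp
  omega

/-- Key lemma: if `t` is not on the path from `a` to the root, then the path
from `a` to `t` enters `t` through the parent of `t`. -/
lemma tPar_mem_tPath {a t : α} (hat : a ≠ t) (hnt : t ∉ (tPath hG a r).support) :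
    t ≠ r ∧ tPar hG r t ∈ (tPath hG a t).support := by
  have htr : t ≠ r := by rintro rfl; exact hnt (Walk.end_mem_support _)
  refine ⟨htr, ?_⟩
  have hnnr : ¬(tPath hG a t).reverse.Nil := Walk.not_nil_of_ne (Ne.symm hat)
  have hadj : G.Adj t ((tPath hG a t).reverse.getVert 1) := Walk.adj_snd hnnr
  set z := (tPath hG a t).reverse.getVert 1 with hz
  have hzq : z ∈ (tPath hG a t).support := by
    have h := getVert_one_mem_support _ hnnr
    rwa [Walk.support_reverse, List.mem_reverse] at h
  rcases tPath_support_subset_union hG r a t z hzq with hza | hzt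
  · rcases tPar_dichotomy hG r hadj with ⟨_, hp⟩ | ⟨hzr, hp⟩
    · rw [hp]; exact hzq
    · exfalso
      have h1 : t ∈ (tPath hG z r).support := by
        rw [← hp]
        exact getVert_one_mem_support _ (tPath_not_nil hG r hzr)
      have hdrop : (tPath hG a r).dropUntil z hza = tPath hG z r :=
        tPath_eq hG _ ((tPath_isPath hG a r).dropUntil hza)
      exact hnt (Walk.support_dropUntil_subset (tPath hG a r) hza (hdrop ▸ h1))
  · rw [tPar_eq_of_adj_mem hG r hadj hzt]
    exact hzq

end TreeAux

/-! ### Skeleton graph adjacency lemmas -/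

section Skeleton

open Sum

/-- Black nodes of the skeleton. -/
abbrev BlackNode (E : Set (Set V)) := {e : Set V // e ∈ E}

/-- Colored nodes of the skeleton. -/
abbrev ColorNode (E : Set (Set V)) :=
  {S : Set V // (S.Nonempty ∧ ∃ e ∈ E, S = PrivateVerts E e) ∨ S ∈ PairInts E}

variable {E : Set (Set V)}

lemma colorNode_coloredSet (S : ColorNode E) : ColoredSet E S.val := S.2

lemma colorNode_nonempty (S : ColorNode E) : S.val.Nonempty :=
  (colorNode_coloredSet S).nonempty

lemma skel_adj_iff {x y : SkelNode E} :
    (SkeletonGraph E).Adj x y ↔ x ≠ y ∧ (SkelAdjAux E x y ∨ SkelAdjAux E y x) :=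
  SimpleGraph.fromRel_adj _ _ _

lemma skel_adj_inl_inr {e : BlackNode E} {S : ColorNode E} :
    (SkeletonGraph E).Adj (inl e) (inr S) ↔
      (S.val = PrivateVerts E e.val ∨ ∃ e' ∈ E, e' ≠ e.val ∧ S.val = e.val ∩ e') := by
  refine skel_adj_iff.trans ?_
  constructor
  · rintro ⟨-, h | h⟩
    · exact h
    · exact h.elim
  · intro h
    exact ⟨fun hc => Sum.inl_ne_inr hc, Or.inl h⟩

lemma skel_adj_inr_inl {e : BlackNode E} {S : ColorNode E} :
    (SkeletonGraph E).Adj (inr S) (inl e) ↔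
      (S.val = PrivateVerts E e.val ∨ ∃ e' ∈ E, e' ≠ e.val ∧ S.val = e.val ∩ e') := by
  exact ((SkeletonGraph E).adj_comm _ _).trans skel_adj_inl_inr

lemma skel_not_adj_inl_inl (e f : BlackNode E) :
    ¬(SkeletonGraph E).Adj (inl e) (inl f) := by
  refine (Iff.not skel_adj_iff).2 ?_
  rintro ⟨-, h | h⟩ <;> exact h

lemma skel_not_adj_inr_inr (S T : ColorNode E) :
    ¬(SkeletonGraph E).Adj (inr S) (inr T) := by
  refine (Iff.not skel_adj_iff).2 ?_
  rintro ⟨-, h | h⟩ <;> exact h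

lemma skel_adj_subset {e : BlackNode E} {S : ColorNode E}
    (h : (SkeletonGraph E).Adj (inl e) (inr S)) : S.val ⊆ e.val := by
  rw [skel_adj_inl_inr] at h
  rcases h with h | ⟨e', _, _, h⟩
  · rw [h]; exact privateVerts_subset
  · rw [h]; exact Set.inter_subset_left

lemma skel_adj_of_subset (hord : Orderly E) {e : BlackNode E} {S : ColorNode E}
    (h : S.val ⊆ e.val) : (SkeletonGraph E).Adj (inl e) (inr S) := by
  rw [skel_adj_inl_inr]
  rcases S.2 with ⟨hne, f, hf, hSf⟩ | hS
  · left
    obtain ⟨v, hv⟩ := hne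
    have hv' : v ∈ PrivateVerts E f := hSf ▸ hv
    have : e.val = f := eq_of_mem_privateVerts hv' e.2 (h hv)
    rw [hSf, this]
  · right
    obtain ⟨hne, e₁, he₁, e₂, he₂, h12, hS2⟩ := hS
    by_cases hcase : e₁ = e.val
    · refine ⟨e₂, he₂, fun hc => h12 (hcase.trans hc.symm), ?_⟩
      rw [hS2, hcase]
    · refine ⟨e₁, he₁, hcase, ?_⟩
      exact pairInts_eq_inter hord ⟨hne, e₁, he₁, e₂, he₂, h12, hS2⟩ e.2 he₁
        (fun hc => hcase hc.symm) h (by rw [hS2]; exact Set.inter_subset_left)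

/-- A colored node adjacent to two distinct black nodes is red, and is their
full intersection (assuming orderliness). -/
lemma color_val_eq_inter (hord : Orderly E) {e f : BlackNode E} {S : ColorNode E}
    (hef : e ≠ f) (h1 : (SkeletonGraph E).Adj (inl e) (inr S))
    (h2 : (SkeletonGraph E).Adj (inl f) (inr S)) :
    S.val ∈ PairInts E ∧ S.val = e.val ∩ f.val := by
  have hne : e.val ≠ f.val := fun h => hef (Subtype.ext h)
  have hs1 := skel_adj_subset h1
  have hs2 := skel_adj_subset h2
  have hred : S.val ∈ PairInts E := by
    rcases S.2 with ⟨⟨v, hv⟩, g, hg, hSg⟩ | hS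
    · exfalso
      have hv' : v ∈ PrivateVerts E g := hSg ▸ hv
      have h1' : e.val = g := eq_of_mem_privateVerts hv' e.2 (hs1 hv)
      have h2' : f.val = g := eq_of_mem_privateVerts hv' f.2 (hs2 hv)
      exact hne (h1'.trans h2'.symm)
    · exact hS
  exact ⟨hred, pairInts_eq_inter hord hred e.2 f.2 hne hs1 hs2⟩

end Skeleton

/-! ### Extracting local windows from cycles -/

section CycleWindow

open SimpleGraph

variable {α : Type*} {G : SimpleGraph α}

lemma cycle_front {x : α} {c : G.Walk x x} (hc : c.IsCycle) :
    ∃ a b : α, G.Adj x a ∧ G.Adj a b ∧ x ≠ a ∧ x ≠ b ∧ a ≠ b ∧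
      a ∈ c.support ∧ b ∈ c.support ∧ (∃ L, c.edges = s(x, a) :: L) := by
  have hlen := hc.three_le_length
  have hnodup := hc.support_nodup
  cases c with
  | nil => simp at hlen
  | @cons _ a _ h₁ q =>
    cases q with
    | nil => simp at hlen
    | @cons _ b _ h₂ rest =>
      cases rest with
      | nil => simp at hlen
      | @cons _ d _ h₃ rest₂ =>
        simp only [Walk.support_cons, List.tail_cons, List.nodup_cons] at hnodup
        obtain ⟨ha1, hb1, -⟩ := hnodup
        refine ⟨a, b, h₁, h₂, h₁.ne, ?_, ?_, ?_, ?_, ?_⟩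
        · intro hxb
          exact hb1 (hxb ▸ Walk.end_mem_support rest₂)
        · intro hab
          exact ha1 (by simp [hab])
        · simp
        · simp
        · exact ⟨_, rfl⟩

lemma isCycle_reverse {x : α} {c : G.Walk x x} (hc : c.IsCycle) : c.reverse.IsCycle := by
  rw [Walk.isCycle_def] at hc ⊢
  obtain ⟨ht, hne, hnodup⟩ := hc
  refine ⟨?_, ?_, ?_⟩
  · rw [Walk.isTrail_def, Walk.edges_reverse]
    exact List.nodup_reverse.2 ((Walk.isTrail_def _).1 ht)
  · intro h
    apply hne
    have := congrArg Walk.length h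
    rw [Walk.length_reverse] at this
    cases c with
    | nil => rfl
    | cons h q => simp at this
  · cases c with
    | nil => simp
    | @cons _ a _ h q =>
      have hsup : (Walk.cons h q).reverse.support = (Walk.cons h q).support.reverse :=
        Walk.support_reverse _
      rw [hsup]
      simp only [Walk.support_cons, List.tail_cons] at hnodup ⊢
      -- q.support ends with x
      have hlast : q.support.getLast (by simp) = x := Walk.getLast_support q
      have hq : q.support = q.support.dropLast ++ [x] := by
        conv_lhs => rw [← List.dropLast_append_getLast (l := q.support) (by simp)]
        rw [hlast]
      rw [hq]
      have hnd : q.support.dropLast.Nodup ∧ x ∉ q.support.dropLast := by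
        constructor
        · exact (List.dropLast_sublist _).nodup (hq ▸ hnodup)
        · intro hx
          have := hq ▸ hnodup
          rw [List.nodup_append] at this
          exact this.2.2 x hx x (by simp) rfl
      have hrw : (x :: (q.support.dropLast ++ [x])).reverse
          = x :: (q.support.dropLast.reverse ++ [x]) := by
          simp only [List.reverse_cons, List.reverse_append, List.reverse_singleton, List.reverse_nil,
            List.cons_append, List.nil_append, List.singleton_append]
      rw [hrw, List.tail_cons]
      simp [List.nodup_append, hnd.1, hnd.2]
      exact fun y hy h => hnd.2 (h ▸ hy)
  

end CycleWindow

section CycleWindow2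

open SimpleGraph

variable {α : Type*} {G : SimpleGraph α}

/-- The 5-window around a vertex of a cycle. -/
lemma cycle_window {x : α} {c : G.Walk x x} (hc : c.IsCycle) :
    ∃ a b a' b' : α, G.Adj x a ∧ G.Adj a b ∧ x ≠ a ∧ x ≠ b ∧ a ≠ b ∧
      G.Adj x a' ∧ G.Adj a' b' ∧ x ≠ a' ∧ x ≠ b' ∧ a' ≠ b' ∧ a ≠ a' ∧
      a ∈ c.support ∧ b ∈ c.support ∧ a' ∈ c.support ∧ b' ∈ c.support := by
  obtain ⟨a, b, h1, h2, h3, h4, h5, h6, h7, L, hL⟩ := cycle_front hc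
  obtain ⟨a', b', h1', h2', h3', h4', h5', h6', h7', L', hL'⟩ :=
    cycle_front (isCycle_reverse hc)
  have hsupr : ∀ y, y ∈ c.reverse.support → y ∈ c.support := fun y hy => by
    rwa [Walk.support_reverse, List.mem_reverse] at hy
  refine ⟨a, b, a', b', h1, h2, h3, h4, h5, h1', h2', h3', h4', h5', ?_,
    h6, h7, hsupr _ h6', hsupr _ h7'⟩
  intro haa
  subst haa
  rw [Walk.edges_reverse] at hL'
  have hnd : c.edges.Nodup := ((Walk.isCycle_def _).1 hc).1.edges_nodup
  have h8 : c.edges = L'.reverse ++ [s(x, a)] := by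
    have := congrArg List.reverse hL'
    rwa [List.reverse_reverse, List.reverse_cons] at this
  have hlen : 3 ≤ c.edges.length := by
    rw [Walk.length_edges]
    exact hc.three_le_length
  cases hrev : L'.reverse with
  | nil =>
    rw [hrev] at h8
    rw [h8] at hlen
    simp at hlen
  | cons f M =>
    rw [hrev] at h8
    rw [hL] at h8
    rw [List.cons_append] at h8
    obtain ⟨hfe, hLM⟩ := List.cons_eq_cons.1 h8
    rw [hL] at hnd
    rw [List.nodup_cons] at hnd
    exact hnd.1 (by rw [hLM]; simp)

end CycleWindow2

/-! ### Small cycles -/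

section SmallCycles

open SimpleGraph

variable {α : Type*} {G : SimpleGraph α}

lemma not_isAcyclic_four {a b c d : α}
    (h1 : G.Adj a b) (h2 : G.Adj b c) (h3 : G.Adj c d) (h4 : G.Adj d a)
    (hac : a ≠ c) (hbd : b ≠ d) : ¬G.IsAcyclic := by
  intro hA
  apply hA (Walk.cons h1 (Walk.cons h2 (Walk.cons h3 (Walk.cons h4 Walk.nil))))
  have hab := h1.ne
  have hbc := h2.ne
  have hcd := h3.ne
  have hda := h4.ne
  rw [Walk.isCycle_def]
  refine ⟨?_, by simp, ?_⟩
  · rw [Walk.isTrail_def]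
    simp only [Walk.edges_cons, Walk.edges_nil, List.nodup_cons, List.mem_cons,
      List.not_mem_nil, List.nodup_nil, or_false, and_true, Sym2.eq_iff]
    push_neg
    have s1 := hab.symm; have s2 := hbc.symm; have s3 := hcd.symm; have s4 := hda.symm
    have s5 := hac.symm; have s6 := hbd.symm
    tauto
  · simp only [Walk.support_cons, Walk.support_nil, List.tail_cons, List.nodup_cons,
      List.mem_cons, List.not_mem_nil, List.nodup_nil]
    push_neg
    have s1 := hab.symm; have s2 := hbc.symm; have s3 := hcd.symm; have s4 := hda.symm
    have s5 := hac.symm; have s6 := hbd.symm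
    tauto

lemma not_isAcyclic_six {a b c d e f : α}
    (h1 : G.Adj a b) (h2 : G.Adj b c) (h3 : G.Adj c d) (h4 : G.Adj d e)
    (h5 : G.Adj e f) (h6 : G.Adj f a)
    (hac : a ≠ c) (hae : a ≠ e) (hce : c ≠ e) (hbd : b ≠ d) (hbf : b ≠ f) (hdf : d ≠ f)
    (had : a ≠ d) (haf : a ≠ f) (hbe : b ≠ e) (hcf : c ≠ f) (hab' : a ≠ b)
    (hbc' : b ≠ c) (hcd' : c ≠ d) (hde' : d ≠ e) (hef' : e ≠ f) (hda' : d ≠ a) :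
    ¬G.IsAcyclic := by
  intro hA
  apply hA (Walk.cons h1 (Walk.cons h2 (Walk.cons h3 (Walk.cons h4
    (Walk.cons h5 (Walk.cons h6 Walk.nil))))))
  rw [Walk.isCycle_def]
  refine ⟨?_, by simp, ?_⟩
  · rw [Walk.isTrail_def]
    simp only [Walk.edges_cons, Walk.edges_nil, List.nodup_cons, List.mem_cons,
      List.not_mem_nil, List.nodup_nil, or_false, and_true, Sym2.eq_iff]
    push_neg
    have s1 := hac.symm; have s2 := hae.symm; have s3 := hce.symm; have s4 := hbd.symm
    have s5 := hbf.symm; have s6 := hdf.symm; have s7 := had.symm; have s8 := haf.symm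
    have s9 := hbe.symm; have s10 := hcf.symm; have s11 := hab'.symm; have s12 := hbc'.symm
    have s13 := hcd'.symm; have s14 := hde'.symm; have s15 := hef'.symm; have s16 := hda'.symm
    tauto
  · simp only [Walk.support_cons, Walk.support_nil, List.tail_cons, List.nodup_cons,
      List.mem_cons, List.not_mem_nil, List.nodup_nil]
    push_neg
    have s1 := hac.symm; have s2 := hae.symm; have s3 := hce.symm; have s4 := hbd.symm
    have s5 := hbf.symm; have s6 := hdf.symm; have s7 := had.symm; have s8 := haf.symm
    have s9 := hbe.symm; have s10 := hcf.symm; have s11 := hab'.symm; have s12 := hbc'.symm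
    have s13 := hcd'.symm; have s14 := hde'.symm; have s15 := hef'.symm; have s16 := hda'.symm
    tauto

end SmallCycles

/-! ### Orderliness from acyclicity of the skeleton -/

section OrderlyOfAcyclic

open Sum

variable {E : Set (Set V)}

lemma orderly_of_isAcyclic (hacyc : (SkeletonGraph E).IsAcyclic) : Orderly E := by
  intro e₁ he₁ e₂ he₂ h12 hS e he
  by_contra hcon
  push_neg at hcon
  obtain ⟨hnsub, hne⟩ := hcon
  have hneE : ((e₁ ∩ e₂) ∩ e).Nonempty := hne
  obtain ⟨x, ⟨hx1, hx2⟩, hxe⟩ := hneE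
  have hee₁ : e ≠ e₁ := by
    rintro rfl
    exact hnsub Set.inter_subset_left
  have hee₂ : e ≠ e₂ := by
    rintro rfl
    exact hnsub Set.inter_subset_right
  set S : ColorNode E := ⟨e₁ ∩ e₂, Or.inr (mem_pairInts he₁ he₂ h12 hS)⟩ with hSdef
  set T₁ : ColorNode E :=
    ⟨e ∩ e₁, Or.inr (mem_pairInts he he₁ hee₁ ⟨x, hxe, hx1⟩)⟩ with hT₁def
  set T₂ : ColorNode E :=
    ⟨e ∩ e₂, Or.inr (mem_pairInts he he₂ hee₂ ⟨x, hxe, hx2⟩)⟩ with hT₂def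
  set b : BlackNode E := ⟨e, he⟩
  set b₁ : BlackNode E := ⟨e₁, he₁⟩
  set b₂ : BlackNode E := ⟨e₂, he₂⟩
  have aS1 : (SkeletonGraph E).Adj (inl b₁) (inr S) :=
    skel_adj_inl_inr.2 (Or.inr ⟨e₂, he₂, fun h => h12 h.symm, rfl⟩)
  have aS2 : (SkeletonGraph E).Adj (inl b₂) (inr S) :=
    skel_adj_inl_inr.2 (Or.inr ⟨e₁, he₁, h12, Set.inter_comm _ _⟩)
  have aT₁e : (SkeletonGraph E).Adj (inl b) (inr T₁) :=
    skel_adj_inl_inr.2 (Or.inr ⟨e₁, he₁, fun h => hee₁ h.symm, rfl⟩)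
  have aT₁e₁ : (SkeletonGraph E).Adj (inl b₁) (inr T₁) :=
    skel_adj_inl_inr.2 (Or.inr ⟨e, he, hee₁, Set.inter_comm _ _⟩)
  have aT₂e : (SkeletonGraph E).Adj (inl b) (inr T₂) :=
    skel_adj_inl_inr.2 (Or.inr ⟨e₂, he₂, fun h => hee₂ h.symm, rfl⟩)
  have aT₂e₂ : (SkeletonGraph E).Adj (inl b₂) (inr T₂) :=
    skel_adj_inl_inr.2 (Or.inr ⟨e, he, hee₂, Set.inter_comm _ _⟩)
  have hST₁ : S ≠ T₁ := by
    intro h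
    apply hnsub
    have : (e₁ ∩ e₂ : Set V) = e ∩ e₁ := congrArg Subtype.val h
    rw [this]
    exact Set.inter_subset_left
  have hST₂ : S ≠ T₂ := by
    intro h
    apply hnsub
    have : (e₁ ∩ e₂ : Set V) = e ∩ e₂ := congrArg Subtype.val h
    rw [this]
    exact Set.inter_subset_left
  have hb1 : (inl b₁ : SkelNode E) ≠ inl b₂ := by
    simp only [ne_eq, inl.injEq]
    exact fun h => h12 (congrArg Subtype.val h)
  have hbb1 : (inl b : SkelNode E) ≠ inl b₁ := by
    simp only [ne_eq, inl.injEq]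
    exact fun h => hee₁ (congrArg Subtype.val h)
  have hbb2 : (inl b : SkelNode E) ≠ inl b₂ := by
    simp only [ne_eq, inl.injEq]
    exact fun h => hee₂ (congrArg Subtype.val h)
  have hlr : ∀ (p : BlackNode E) (q : ColorNode E), (inl p : SkelNode E) ≠ inr q :=
    fun p q => Sum.inl_ne_inr
  by_cases hT : T₁ = T₂
  · -- 4-cycle: b₁ — S — b₂ — T₁ — b₁
    have aT₁e₂ : (SkeletonGraph E).Adj (inl b₂) (inr T₁) := by rw [hT]; exact aT₂e₂
    exact not_isAcyclic_four aS1 aS2.symm aT₁e₂ aT₁e₁.symm hb1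
      (fun h => hST₁ (Sum.inr_injective h)) hacyc
  · -- 6-cycle: b — T₁ — b₁ — S — b₂ — T₂ — b
    exact not_isAcyclic_six aT₁e aT₁e₁.symm aS1 aS2.symm aT₂e₂ aT₂e.symm
      hbb1 hbb2 hb1
      (fun h => hST₁ (Sum.inr_injective h).symm)
      (fun h => hT (Sum.inr_injective h))
      (fun h => hST₂ (Sum.inr_injective h))
      (hlr _ _) (hlr _ _) ((hlr _ _).symm) (hlr _ _) (hlr _ _) ((hlr _ _).symm)
      (hlr _ _) ((hlr _ _).symm) (hlr _ _) ((hlr _ _).symm) hacyc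
end OrderlyOfAcyclic

/-! ### Connectivity of the skeleton -/

section SkelConnected

open Sum

variable {E : Set (Set V)}

lemma skel_reach_of_common {e f : Set V} (he : e ∈ E) (hf : f ∈ E) {v : V}
    (hv : v ∈ e) (hvf : v ∈ f) :
    (SkeletonGraph E).Reachable (inl ⟨e, he⟩) (inl ⟨f, hf⟩) := by
  by_cases hef : e = f
  · subst hef
    exact SimpleGraph.Reachable.refl _
  · set S : ColorNode E := ⟨e ∩ f, Or.inr (mem_pairInts he hf hef ⟨v, hv, hvf⟩)⟩
    have a1 : (SkeletonGraph E).Adj (inl ⟨e, he⟩) (inr S) :=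
      skel_adj_inl_inr.2 (Or.inr ⟨f, hf, fun h => hef h.symm, rfl⟩)
    have a2 : (SkeletonGraph E).Adj (inl ⟨f, hf⟩) (inr S) :=
      skel_adj_inl_inr.2 (Or.inr ⟨e, he, hef, Set.inter_comm _ _⟩)
    exact a1.reachable.trans a2.reachable.symm

lemma color_adj_black (S : ColorNode E) :
    ∃ b : BlackNode E, (SkeletonGraph E).Adj (inl b) (inr S) := by
  rcases S.2 with ⟨hne, f, hf, hSf⟩ | ⟨hne, e₁, he₁, e₂, he₂, h12, hS2⟩
  · exact ⟨⟨f, hf⟩, skel_adj_inl_inr.2 (Or.inl hSf)⟩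
  · exact ⟨⟨e₁, he₁⟩, skel_adj_inl_inr.2 (Or.inr ⟨e₂, he₂, fun h => h12 h.symm, hS2⟩)⟩

lemma skel_reach_blacks [Fintype V] (hconn : HConnected E) (hcard : ∀ e ∈ E, 2 ≤ e.ncard)
    (a b : BlackNode E) : (SkeletonGraph E).Reachable (inl a) (inl b) := by
  have hane : a.val.Nonempty := by
    apply Set.nonempty_of_ncard_ne_zero
    have := hcard a.val a.2
    omega
  have hbne : b.val.Nonempty := by
    apply Set.nonempty_of_ncard_ne_zero
    have := hcard b.val b.2
    omega
  obtain ⟨x, hx⟩ := hane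
  obtain ⟨y, hy⟩ := hbne
  obtain ⟨t, v, ep, ⟨hvinj, heinj, hemem, hinc⟩, hv0, hvlast⟩ := hconn x y
  cases t with
  | zero =>
    -- x = y
    have hxy : x = y := by rw [← hv0, ← hvlast]; rfl
    exact skel_reach_of_common a.2 b.2 hx (hxy ▸ hy)
  | succ t' =>
    -- reach from a to each edge of the path
    have key : ∀ n (hn : n < t' + 1),
        (SkeletonGraph E).Reachable (inl a) (inl ⟨ep ⟨n, hn⟩, hemem ⟨n, hn⟩⟩) := by
      intro n
      induction n with
      | zero =>
        intro hn
        have h0 : v 0 ∈ ep ⟨0, hn⟩ := by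
          have := (hinc ⟨0, hn⟩).1
          simpa using this
        exact skel_reach_of_common a.2 (hemem ⟨0, hn⟩) hx (hv0 ▸ h0)
      | succ n ih =>
        intro hn
        have hn' : n < t' + 1 := by omega
        have h1 : v ⟨n + 1, by omega⟩ ∈ ep ⟨n, hn'⟩ := by
          have := (hinc ⟨n, hn'⟩).2
          have heq : (⟨n, hn'⟩ : Fin (t' + 1)).succ = ⟨n + 1, by omega⟩ := by
            apply Fin.ext
            simp
          rwa [heq] at this
        have h2 : v ⟨n + 1, by omega⟩ ∈ ep ⟨n + 1, hn⟩ := by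
          have := (hinc ⟨n + 1, hn⟩).1
          have heq : (⟨n + 1, hn⟩ : Fin (t' + 1)).castSucc = ⟨n + 1, by omega⟩ := by
            apply Fin.ext
            simp
          rwa [heq] at this
        exact (ih hn').trans
          (skel_reach_of_common (hemem ⟨n, hn'⟩) (hemem ⟨n + 1, hn⟩) h1 h2)
    have hlast : v (Fin.last (t' + 1)) ∈ ep ⟨t', by omega⟩ := by
      have := (hinc ⟨t', by omega⟩).2
      have heq : (⟨t', by omega⟩ : Fin (t' + 1)).succ = Fin.last (t' + 1) := by
        apply Fin.ext
        simp
      rwa [heq] at this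
    exact (key t' (by omega)).trans
      (skel_reach_of_common (hemem ⟨t', by omega⟩) b.2 (hvlast ▸ hlast) hy)

lemma skel_connected [Fintype V] (hconn : HConnected E) (hcard : ∀ e ∈ E, 2 ≤ e.ncard)
    (hne : Nonempty (SkelNode E)) : (SkeletonGraph E).Connected := by
  rw [SimpleGraph.connected_iff]
  refine ⟨?_, hne⟩
  intro n m
  cases n with
  | inl a =>
    cases m with
    | inl b => exact skel_reach_blacks hconn hcard a b
    | inr S =>
      obtain ⟨b, hb⟩ := color_adj_black S
      exact (skel_reach_blacks hconn hcard a b).trans hb.reachable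
  | inr S =>
    obtain ⟨b, hb⟩ := color_adj_black S
    cases m with
    | inl c => exact (hb.reachable.symm).trans (skel_reach_blacks hconn hcard b c)
    | inr T =>
      obtain ⟨c, hc⟩ := color_adj_black T
      exact hb.reachable.symm.trans ((skel_reach_blacks hconn hcard b c).trans hc.reachable)

end SkelConnected

/-! ### Acyclicity of the skeleton of an orderly hypertree -/

section FwdAcyclic

open Sum SimpleGraph

variable {E : Set (Set V)}

lemma fwd_acyclic [Fintype V] (hord : Orderly E) {T : SimpleGraph V} (hT : T.IsTree)
    (hind : ∀ e ∈ E, (T.induce e).Connected) : (SkeletonGraph E).IsAcyclic := by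
  classical
  obtain ⟨r⟩ : Nonempty V := hT.isConnected.nonempty
  -- minimal-depth point of a nonempty set
  have htop : ∀ S : Set V, S.Nonempty →
      ∃ z, z ∈ S ∧ ∀ y ∈ S, tDepth hT r z ≤ tDepth hT r y := by
    intro S hS
    have hfin : S.toFinset.Nonempty := by rwa [Set.toFinset_nonempty]
    obtain ⟨z, hz, hmin⟩ := S.toFinset.exists_min_image (tDepth hT r) hfin
    exact ⟨z, by simpa using hz, fun y hy => hmin y (by simpa using hy)⟩
  set topF : ColorNode E → V :=
    fun S => Classical.choose (htop S.val (colorNode_nonempty S)) with htopF_def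
  have htopF : ∀ S : ColorNode E, topF S ∈ S.val ∧
      ∀ y ∈ S.val, tDepth hT r (topF S) ≤ tDepth hT r y :=
    fun S => Classical.choose_spec (htop S.val (colorNode_nonempty S))
  set score : SkelNode E → ℕ :=
    Sum.elim (fun _ => 0) (fun S => tDepth hT r (topF S)) with hscore_def
  intro n w hw
  -- find a colored node on the cycle
  have hcol : ∃ S : ColorNode E, (inr S : SkelNode E) ∈ w.support := by
    obtain ⟨a, b, h1, -, -, -, -, ha, -, -⟩ := cycle_front hw
    cases n with
    | inr S => exact ⟨S, Walk.start_mem_support w⟩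
    | inl e =>
      cases a with
      | inl f => exact absurd h1 (skel_not_adj_inl_inl e f)
      | inr S => exact ⟨S, ha⟩
  obtain ⟨S₀, hS₀⟩ := hcol
  -- pick the colored node on the cycle with max score
  set F := w.support.toFinset.filter (fun x => x.isRight) with hF
  have hFne : F.Nonempty := ⟨inr S₀, Finset.mem_filter.2 ⟨List.mem_toFinset.2 hS₀, rfl⟩⟩
  obtain ⟨m, hmF, hmax⟩ := F.exists_max_image score hFne
  have hmax' : ∀ y ∈ w.support, y.isRight → score y ≤ score m := by
    intro y hy hyr
    exact hmax y (by simp [hF, hy, hyr])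
  obtain ⟨hmsup, -⟩ : m ∈ w.support ∧ m.isRight = true := by
    constructor
    · have := hmF; simp [hF] at this; exact this.1
    · have := hmF; simp [hF] at this; exact this.2
  obtain ⟨Sm, rfl⟩ : ∃ S : ColorNode E, m = inr S := by
    cases m with
    | inl e => exact absurd (Finset.mem_filter.1 hmF).2 Bool.false_ne_true
    | inr S => exact ⟨S, rfl⟩
  -- rotate the cycle to start at `inr Sm`
  have hc : (w.rotate _ hmsup).IsCycle := hw.rotate hmsup
  have hsup_c : ∀ y, y ∈ (w.rotate _ hmsup).support → y ∈ w.support := by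
    intro y hy
    replace hy := (Walk.mem_support_iff _).1 hy
    rcases hy with rfl | hy
    · exact hmsup
    · have := (Walk.support_rotate w _ hmsup).mem_iff.1 hy
      rw [Walk.mem_support_iff]
      exact Or.inr this
  obtain ⟨a, b, a', b', h1, h2, h3, h4, h5, h1', h2', h3', h4', h5', haa,
    hasup, hbsup, hasup', hbsup'⟩ := cycle_window hc
  obtain ⟨eP, rfl⟩ : ∃ e : BlackNode E, a = inl e := by
    cases a with
    | inl e => exact ⟨e, rfl⟩
    | inr S => exact absurd h1 (skel_not_adj_inr_inr _ _)
  obtain ⟨eM, rfl⟩ : ∃ e : BlackNode E, a' = inl e := by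
    cases a' with
    | inl e => exact ⟨e, rfl⟩
    | inr S => exact absurd h1' (skel_not_adj_inr_inr _ _)
  obtain ⟨C2, rfl⟩ : ∃ S : ColorNode E, b = inr S := by
    cases b with
    | inr S => exact ⟨S, rfl⟩
    | inl f => exact absurd h2 (skel_not_adj_inl_inl _ _)
  obtain ⟨C2', rfl⟩ : ∃ S : ColorNode E, b' = inr S := by
    cases b' with
    | inr S => exact ⟨S, rfl⟩
    | inl f => exact absurd h2' (skel_not_adj_inl_inl _ _)
  have hePeM : eP ≠ eM := fun h => haa (by rw [h])
  have hSm_eq := color_val_eq_inter hord hePeM h1.symm h1'.symm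
  have hC2P : C2.val ⊆ eP.val := skel_adj_subset h2
  have hC2M : C2'.val ⊆ eM.val := skel_adj_subset h2'
  have hdisj : ∀ (A B : ColorNode E), A ≠ B → ∀ z, z ∈ A.val → z ∈ B.val → False := by
    intro A B hne z hA hB
    exact hne (Subtype.ext (coloredSet_eq_of_mem hord A.2 B.2 hA hB))
  have hC2Sm : C2 ≠ Sm := fun h => h4 (by rw [h])
  have hC2Sm' : C2' ≠ Sm := fun h => h4' (by rw [h])
  have htS_P : topF Sm ∈ eP.val := by
    have := (htopF Sm).1
    rw [hSm_eq.2] at this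
    exact this.1
  have htS_M : topF Sm ∈ eM.val := by
    have := (htopF Sm).1
    rw [hSm_eq.2] at this
    exact this.2
  -- a symmetric claim, applied to both sides of the window
  have side : ∀ (eS : BlackNode E) (C : ColorNode E), C ≠ Sm → C.val ⊆ eS.val →
      topF Sm ∈ eS.val → (inr C : SkelNode E) ∈ w.support →
      topF Sm ≠ r ∧ tPar hT r (topF Sm) ∈ eS.val := by
    intro eS C hCSm hCsub htSe hCsup
    have ht2C : topF C ∈ C.val := (htopF C).1
    have hne2 : topF C ≠ topF Sm := by
      intro h
      exact hdisj C Sm hCSm (topF Sm) (h ▸ ht2C) (htopF Sm).1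
    have hs2 : tDepth hT r (topF C) ≤ tDepth hT r (topF Sm) := by
      have := hmax' (inr C) hCsup rfl
      simpa [hscore_def] using this
    have hnt : topF Sm ∉ (tPath hT (topF C) r).support := by
      intro hmem2
      have hlt := tDepth_lt_of_mem_support hT r hmem2 (fun h => hne2 h.symm)
      omega
    obtain ⟨htSr, hpar⟩ := tPar_mem_tPath hT r hne2 hnt
    refine ⟨htSr, ?_⟩
    have hsubP : ∀ z ∈ (tPath hT (topF C) (topF Sm)).support, z ∈ eS.val :=
      tPath_support_subset_of_induce hT (hind eS.val eS.2) (hCsub ht2C) htSe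
    exact hsubP _ hpar
  obtain ⟨htSr, hpP⟩ := side eP C2 hC2Sm hC2P htS_P (hsup_c _ hbsup)
  obtain ⟨-, hpM⟩ := side eM C2' hC2Sm' hC2M htS_M (hsup_c _ hbsup')
  have hp_in_Sm : tPar hT r (topF Sm) ∈ Sm.val := by
    rw [hSm_eq.2]
    exact ⟨hpP, hpM⟩
  have hmin := (htopF Sm).2 _ hp_in_Sm
  have hdp := tDepth_par hT r htSr
  omega

end FwdAcyclic

/-! ### Blocks -/

section Blocks

variable {E : Set (Set V)}

/-- The block (colored set) of a vertex. -/
noncomputable def blockOf (hcover : ∀ v : V, ∃ e ∈ E, v ∈ e) (v : V) : Set V :=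
  (exists_coloredSet_mem hcover v).choose

lemma blockOf_colored (hcover : ∀ v : V, ∃ e ∈ E, v ∈ e) (v : V) :
    ColoredSet E (blockOf hcover v) :=
  (exists_coloredSet_mem hcover v).choose_spec.1

lemma mem_blockOf (hcover : ∀ v : V, ∃ e ∈ E, v ∈ e) (v : V) : v ∈ blockOf hcover v :=
  (exists_coloredSet_mem hcover v).choose_spec.2

lemma blockOf_eq (hord : Orderly E) (hcover : ∀ v : V, ∃ e ∈ E, v ∈ e) {C : Set V}
    (hC : ColoredSet E C) {v : V} (hv : v ∈ C) : C = blockOf hcover v :=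
  coloredSet_eq_of_mem hord hC (blockOf_colored hcover v) hv (mem_blockOf hcover v)

end Blocks

/-! ### Construction of the hypertree from a tree skeleton -/

section BwdHypertree

open Sum SimpleGraph

variable {E : Set (Set V)}

lemma hypertree_of_skel_tree [Fintype V] (hskel : (SkeletonGraph E).IsTree)
    (hord : Orderly E) (hcover : ∀ v : V, ∃ e ∈ E, v ∈ e)
    (hcard : ∀ e ∈ E, 2 ≤ e.ncard) : IsHypertree E := by
  classical
  have hVne : Nonempty V := by
    obtain ⟨n⟩ := hskel.isConnected.nonempty
    cases n with
    | inl e =>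
      have : e.val.Nonempty := by
        apply Set.nonempty_of_ncard_ne_zero
        have := hcard e.val e.2
        omega
      exact ⟨this.some⟩
    | inr S => exact ⟨(colorNode_nonempty S).some⟩
  obtain ⟨v₀⟩ := hVne
  -- blocks as colored nodes
  set blk : V → ColorNode E := fun v => ⟨blockOf hcover v, blockOf_colored hcover v⟩
    with hblk_def
  have hblk_mem : ∀ v, v ∈ (blk v).val := fun v => mem_blockOf hcover v
  have hblk_eq : ∀ (C : ColorNode E) (v : V), v ∈ C.val → blk v = C := by
    intro C v hv
    exact Subtype.ext (blockOf_eq hord hcover C.2 hv).symm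
  set rep : ColorNode E → V := fun S => (colorNode_nonempty S).some with hrep_def
  have hrep : ∀ S, rep S ∈ S.val := fun S => (colorNode_nonempty S).some_mem
  have hblk_rep : ∀ S, blk (rep S) = S := fun S => hblk_eq S (rep S) (hrep S)
  have hdisj : ∀ (A B : ColorNode E), A ≠ B → ∀ z, z ∈ A.val → z ∈ B.val → False := by
    intro A B hne z hA hB
    exact hne (Subtype.ext (coloredSet_eq_of_mem hord A.2 B.2 hA hB))
  have hrep_inj : ∀ (A B : ColorNode E), rep A = rep B → A = B := by
    intro A B h
    by_contra hne
    exact hdisj A B hne (rep A) (hrep A) (h ▸ hrep B)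
  -- the root of the skeleton tree
  set ρ : SkelNode E := inr (blk v₀) with hρ_def
  -- parent of a black node, as a colored node
  have hPC : ∀ eb : BlackNode E, ∃ S : ColorNode E,
      tPar hskel ρ (inl eb) = inr S := by
    intro eb
    have hne : (inl eb : SkelNode E) ≠ ρ := fun h => Sum.inl_ne_inr h
    have hadj := tPar_adj hskel ρ hne
    cases hp : tPar hskel ρ (inl eb) with
    | inl f =>
      rw [hp] at hadj
      exact absurd hadj (skel_not_adj_inl_inl _ _)
    | inr S => exact ⟨S, rfl⟩
  set PC : BlackNode E → ColorNode E := fun eb => (hPC eb).choose with hPC_def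
  have hPC_spec : ∀ eb, tPar hskel ρ (inl eb) = inr (PC eb) :=
    fun eb => (hPC eb).choose_spec
  have hPC_adj : ∀ eb : BlackNode E, (SkeletonGraph E).Adj (inl eb) (inr (PC eb)) := by
    intro eb
    have hne : (inl eb : SkelNode E) ≠ ρ := fun h => Sum.inl_ne_inr h
    have := tPar_adj hskel ρ hne
    rwa [hPC_spec eb] at this
  have hPC_sub : ∀ eb : BlackNode E, (PC eb).val ⊆ eb.val :=
    fun eb => skel_adj_subset (hPC_adj eb)
  -- parent of a colored node, as a black node
  obtain ⟨e₀, he₀, -⟩ := hcover v₀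
  have hPB : ∀ C : ColorNode E, ∃ eb : BlackNode E,
      (inr C : SkelNode E) ≠ ρ → tPar hskel ρ (inr C) = inl eb := by
    intro C
    by_cases hne : (inr C : SkelNode E) = ρ
    · exact ⟨⟨e₀, he₀⟩, fun h => absurd hne h⟩
    · have hadj := tPar_adj hskel ρ hne
      cases hp : tPar hskel ρ (inr C) with
      | inl f => exact ⟨f, fun _ => rfl⟩
      | inr S =>
        rw [hp] at hadj
        exact absurd hadj (skel_not_adj_inr_inr _ _)
  set PB : ColorNode E → BlackNode E := fun C => (hPB C).choose with hPB_def
  have hPB_spec : ∀ C : ColorNode E, (inr C : SkelNode E) ≠ ρ →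
      tPar hskel ρ (inr C) = inl (PB C) := fun C => (hPB C).choose_spec
  -- vertex parent map
  set d : SkelNode E → ℕ := tDepth hskel ρ with hd_def
  set π : V → V := fun v =>
    if v = rep (blk v) then
      (if (inr (blk v) : SkelNode E) = ρ then v else rep (PC (PB (blk v))))
    else rep (blk v) with hπ_def
  set φ : V → ℕ := fun v => 2 * d (inr (blk v)) + (if v = rep (blk v) then 0 else 1)
    with hφ_def
  -- depth of the grandparent
  have hgp : ∀ C : ColorNode E, (inr C : SkelNode E) ≠ ρ →
      d (inr (PC (PB C))) + 2 = d (inr C) ∧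
      (SkeletonGraph E).Adj (inl (PB C)) (inr C) := by
    intro C hne
    have h1 : d (inr C) = d (inl (PB C)) + 1 := by
      have := tDepth_par hskel ρ hne
      rwa [hPB_spec C hne] at this
    have h2 : d (inl (PB C)) = d (inr (PC (PB C))) + 1 := by
      have := tDepth_par hskel ρ (show (inl (PB C) : SkelNode E) ≠ ρ from
        fun h => Sum.inl_ne_inr h)
      rwa [hPC_spec (PB C)] at this
    constructor
    · omega
    · have := tPar_adj hskel ρ hne
      rw [hPB_spec C hne] at this
      exact this.symm
  -- the parent strictly decreases φ
  have hπlt : ∀ v, π v ≠ v → φ (π v) < φ v := by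
    intro v hne
    by_cases hv : v = rep (blk v)
    · -- rep case
      have hnr : (inr (blk v) : SkelNode E) ≠ ρ := by
        intro h
        apply hne
        simp only [hπ_def, if_pos hv, if_pos h]
      have hπv : π v = rep (PC (PB (blk v))) := by
        simp only [hπ_def, if_pos hv, if_neg hnr]
      have hblkπ : blk (π v) = PC (PB (blk v)) := by
        rw [hπv]
        exact hblk_rep _
      have hd2 := (hgp (blk v) hnr).1
      simp only [hφ_def, hblkπ, hπv, hblk_rep, if_pos rfl, if_pos hv, if_true]
      omega
    · -- non-rep case
      have hπv : π v = rep (blk v) := by simp only [hπ_def, if_neg hv]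
      have hblkπ : blk (π v) = blk v := by rw [hπv]; exact hblk_rep _
      simp only [hφ_def, hblkπ, hπv, hblk_rep, if_pos rfl, if_neg hv, if_true]
      omega
  -- the tree on V
  set T : SimpleGraph V := SimpleGraph.fromRel (fun a b => b = π a) with hT_def
  have hT_adj : ∀ a b, T.Adj a b ↔ a ≠ b ∧ (b = π a ∨ a = π b) := by
    intro a b
    rw [hT_def]
    exact SimpleGraph.fromRel_adj _ _ _
  have hT_adj_π : ∀ v, π v ≠ v → T.Adj v (π v) := by
    intro v hne
    rw [hT_adj]
    exact ⟨fun h => hne h.symm, Or.inl rfl⟩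
  -- monotonicity along edges
  have hmono : ∀ a b, T.Adj a b → (b = π a ∧ φ b < φ a) ∨ (a = π b ∧ φ a < φ b) := by
    intro a b hab
    rw [hT_adj] at hab
    obtain ⟨hne, h | h⟩ := hab
    · left
      exact ⟨h, h ▸ hπlt a (fun hc => hne (h.trans hc).symm)⟩
    · right
      exact ⟨h, h ▸ hπlt b (fun hc => hne (h.trans hc))⟩
  -- the sink
  set w₀ : V := rep (blk v₀) with hw₀_def
  have hsink : ∀ v, π v = v → v = w₀ := by
    intro v hfix
    by_cases hv : v = rep (blk v)
    · by_cases hr : (inr (blk v) : SkelNode E) = ρ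
      · have hbv : blk v = blk v₀ := Sum.inr_injective hr
        rw [hw₀_def, ← hbv]
        exact hv
      · exfalso
        have hπv : π v = rep (PC (PB (blk v))) := by
          simp only [hπ_def, if_pos hv, if_neg hr]
        have hd2 := (hgp (blk v) hr).1
        have hgpne : PC (PB (blk v)) ≠ blk v := by
          intro h
          rw [h] at hd2
          omega
        have hfix' : rep (PC (PB (blk v))) = v := by rw [← hπv]; exact hfix
        have hx := hrep (PC (PB (blk v)))
        rw [hfix'] at hx
        exact hdisj _ _ hgpne v hx (hblk_mem v)
    · exfalso
      have hπv : π v = rep (blk v) := by simp only [hπ_def, if_neg hv]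
      exact hv ((hfix.symm).trans hπv)
  have hreachAux : ∀ n v, φ v = n → T.Reachable v w₀ := by
    intro n
    induction n using Nat.strong_induction_on with
    | _ n ih =>
      intro v hn
      by_cases hfix : π v = v
      · rw [hsink v hfix]
      · exact (hT_adj_π v hfix).reachable.trans (ih _ (hn ▸ hπlt v hfix) _ rfl)
  have hreach : ∀ v, T.Reachable v w₀ := fun v => hreachAux (φ v) v rfl
  have hTconn : T.Connected := by
    rw [SimpleGraph.connected_iff]
    exact ⟨fun a b => (hreach a).trans (hreach b).symm, ⟨v₀⟩⟩
  have hTacyc : T.IsAcyclic := by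
    intro v c hc
    have hsupne : v ∈ c.support := Walk.start_mem_support c
    obtain ⟨m, hm, hmax⟩ := c.support.toFinset.exists_max_image φ ⟨v, by simpa using hsupne⟩
    rw [List.mem_toFinset] at hm
    have hmax' : ∀ y ∈ c.support, φ y ≤ φ m := fun y hy => hmax y (by simpa using hy)
    have hc' : (c.rotate _ hm).IsCycle := hc.rotate hm
    have hsup_c : ∀ y, y ∈ (c.rotate _ hm).support → y ∈ c.support := by
      intro y hy
      rw [Walk.mem_support_iff] at hy
      rcases hy with rfl | hy
      · exact hm
      · have := (Walk.support_rotate c _ hm).mem_iff.1 hy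
        rw [Walk.mem_support_iff]
        exact Or.inr this
    obtain ⟨a, b, a', b', h1, -, -, -, -, h1', -, -, -, -, haa, hasup, -, hasup', -⟩ :=
      cycle_window hc'
    have hya : a = π m := by
      rcases hmono m a h1 with ⟨h, -⟩ | ⟨-, hlt⟩
      · exact h
      · exact absurd hlt (by have := hmax' a (hsup_c a hasup); omega)
    have hya' : a' = π m := by
      rcases hmono m a' h1' with ⟨h, -⟩ | ⟨-, hlt⟩
      · exact h
      · exact absurd hlt (by have := hmax' a' (hsup_c a' hasup'); omega)
    exact haa (hya.trans hya'.symm)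
  -- the hypertree property
  refine ⟨T, ⟨hTconn, hTacyc⟩, ?_⟩
  intro e he
  have hene : e.Nonempty := by
    apply Set.nonempty_of_ncard_ne_zero
    have := hcard e he
    omega
  set eb : BlackNode E := ⟨e, he⟩ with heb_def
  set te : V := rep (PC eb) with hte_def
  have hte_mem : te ∈ e := hPC_sub eb (hrep _)
  have hblk_sub : ∀ a, a ∈ e → (blk a).val ⊆ e := by
    intro a ha
    exact coloredSet_subset hord (blk a).2 he (hblk_mem a) ha
  have hkey : ∀ a (ha : a ∈ e), (T.induce e).Reachable ⟨a, ha⟩ ⟨te, hte_mem⟩ := by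
    intro a ha
    have hv'e : rep (blk a) ∈ e := hblk_sub a ha (hrep _)
    have step1 : (T.induce e).Reachable ⟨a, ha⟩ ⟨rep (blk a), hv'e⟩ := by
      by_cases hva : a = rep (blk a)
      · have : (⟨a, ha⟩ : e) = ⟨rep (blk a), hv'e⟩ := Subtype.ext hva
        rw [this]
      · have hπa : π a = rep (blk a) := by simp only [hπ_def, if_neg hva]
        have hadj : T.Adj a (rep (blk a)) := by
          rw [← hπa]
          exact hT_adj_π a (fun h => hva (h.symm.trans hπa))
        exact (show (T.induce e).Adj ⟨a, ha⟩ ⟨rep (blk a), hv'e⟩ from hadj).reachable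
    have hadjS : (SkeletonGraph E).Adj (inl eb) (inr (blk a)) :=
      skel_adj_of_subset hord (hblk_sub a ha)
    have hblkv' : blk (rep (blk a)) = blk a := hblk_rep (blk a)
    rcases tPar_dichotomy hskel ρ hadjS with ⟨hnreb, hpar⟩ | ⟨hnrC, hpar⟩
    · have hPCa : PC eb = blk a := by
        have h0 := hPC_spec eb
        rw [hpar] at h0
        exact Sum.inr_injective h0.symm
      have hteeq : (⟨rep (blk a), hv'e⟩ : e) = ⟨te, hte_mem⟩ := by
        apply Subtype.ext
        show rep (blk a) = te
        rw [hte_def, hPCa]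
      exact hteeq ▸ step1
    · have hPBa : PB (blk a) = eb := by
        have h0 := hPB_spec (blk a) hnrC
        rw [hpar] at h0
        exact Sum.inl_injective h0.symm
      by_cases hv'te : rep (blk a) = te
      · have hteeq : (⟨rep (blk a), hv'e⟩ : e) = ⟨te, hte_mem⟩ := Subtype.ext hv'te
        exact hteeq ▸ step1
      · have hπv' : π (rep (blk a)) = te := by
          have hv'rep : rep (blk a) = rep (blk (rep (blk a))) := by rw [hblkv']
          have hnr' : (inr (blk (rep (blk a))) : SkelNode E) ≠ ρ := by
            rw [hblkv']
            exact hnrC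
          have hstep : π (rep (blk a)) = rep (PC (PB (blk (rep (blk a))))) := by
            simp only [hπ_def, if_pos hv'rep, if_neg hnr']
          rw [hstep, hblkv', hPBa]
        have hadj2 : T.Adj (rep (blk a)) te := by
          rw [← hπv']
          exact hT_adj_π _ (by rw [hπv']; exact fun h => hv'te h.symm)
        exact step1.trans
          ((show (T.induce e).Adj ⟨rep (blk a), hv'e⟩ ⟨te, hte_mem⟩ from hadj2).reachable)
  rw [SimpleGraph.connected_iff]
  constructor
  · intro x y
    exact (hkey x.1 x.2).trans (hkey y.1 y.2).symm
  · exact ⟨⟨hene.some, hene.some_mem⟩⟩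

end BwdHypertree

/-- A connected hypergraph without nested edges in which every vertex
lies in some edge is an orderly hypertree iff its skeleton graph is a tree. -/
theorem stmt_11 {V : Type*} [Fintype V] (E : Set (Set V))
    (hcard : ∀ e ∈ E, 2 ≤ e.ncard) (hconn : HConnected E) (hnest : NoNestedEdges E)
    (hcover : ∀ v : V, ∃ e ∈ E, v ∈ e) :
    (Orderly E ∧ IsHypertree E) ↔ (SkeletonGraph E).IsTree := by
  constructor
  · rintro ⟨hord, T, hT, hind⟩
    refine ⟨skel_connected hconn hcard ?_, fwd_acyclic hord hT hind⟩
    obtain ⟨v⟩ := hT.isConnected.nonempty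
    obtain ⟨e, he, -⟩ := hcover v
    exact ⟨Sum.inl ⟨e, he⟩⟩
  · intro hskel
    have hord := orderly_of_isAcyclic hskel.2
    exact ⟨hord, hypertree_of_skel_tree hskel hord hcover hcard⟩
end
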